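/- arXiv:quant-ph/0308140 — 11 statements merged into one kernel-verified Lean document; each statement's English description precedes it below -/
import Mathlib

section
/- Fix ε with 0 < ε ≤ 1/4, let d ≥ 1 and n_q be natural numbers, let ψ be a unit vector in ℂ² ⊗ ℂ^d (i.e. a unit vector in EuclideanSpace ℂ (Fin 2 × Fin d)), let U_0, U_1, …, U_{n_q} be unitary matrices on ℂ² ⊗ ℂ^d, and let φ : Fin 2 × Fin d → ℝ be any function (the classical output map). For x ∈ [0,1] let Q_x := R(arcsin √x) ⊗ I_d (the phase query acting on the first qubit) and let A_x := U_{n_q} Q_x U_{n_q−1} ⋯ U_1 Q_x U_0. If for every x ∈ [0,1] the algorithm succeeds, i.e. ∑_{k : |φ(k) − x| < ε} |(A_x ψ)_k|² ≥ 3/4, then n_q ≥ 1/(16 ε). -/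
open Kronecker

/-- The 2×2 rotation matrix by angle `θ`, as a complex matrix. -/
noncomputable def RotC (θ : ℝ) : Matrix (Fin 2) (Fin 2) ℂ :=
  !![(Real.cos θ : ℂ), (-(Real.sin θ) : ℂ); (Real.sin θ : ℂ), (Real.cos θ : ℂ)]

/-- The matrix of the quantum algorithm `Uₙ Q Uₙ₋₁ Q ⋯ U₁ Q U₀` with `n` queries `Q`. -/
noncomputable def algMat {ι : Type} [Fintype ι] [DecidableEq ι]
    (U : ℕ → Matrix ι ι ℂ) (Q : Matrix ι ι ℂ) : ℕ → Matrix ι ι ℂ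
  | 0 => U 0
  | n + 1 => U (n + 1) * Q * algMat U Q n

section Aux
open Matrix

lemma rot_star_mul (θ : ℝ) : star (RotC θ) * RotC θ = 1 := by
  ext i j
  fin_cases i <;> fin_cases j <;>
    simp [RotC, Matrix.mul_apply, Fin.sum_univ_two, Matrix.star_eq_conjTranspose,
      Matrix.conjTranspose_apply, Matrix.one_apply, Complex.ext_iff, Complex.cos_ofReal_re,
      Complex.sin_ofReal_re, Complex.cos_ofReal_im, Complex.sin_ofReal_im] <;>
    nlinarith [Real.sin_sq_add_cos_sq θ]

lemma rotdiff_star_mul (θ η : ℝ) :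
    star (RotC θ - RotC η) * (RotC θ - RotC η)
      = ((2 - 2 * Real.cos (θ - η) : ℝ) : ℂ) • 1 := by
  ext i j
  fin_cases i <;> fin_cases j <;>
    simp [RotC, Matrix.mul_apply, Fin.sum_univ_two, Matrix.star_eq_conjTranspose,
      Matrix.conjTranspose_apply, Matrix.one_apply, Real.cos_sub, Complex.ext_iff,
      Complex.cos_ofReal_re, Complex.sin_ofReal_re, Complex.cos_ofReal_im,
      Complex.sin_ofReal_im] <;>
    nlinarith [Real.sin_sq_add_cos_sq θ, Real.sin_sq_add_cos_sq η]

lemma norm_clm_of_star_mul_self {ι : Type} [Fintype ι] [DecidableEq ι]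
    (M : Matrix ι ι ℂ) (c : ℝ) (hc : 0 ≤ c) (h : star M * M = (c : ℂ) • 1)
    (v : EuclideanSpace ℂ ι) :
    ‖toEuclideanCLM (𝕜 := ℂ) M v‖ = Real.sqrt c * ‖v‖ := by
  set f := toEuclideanCLM (𝕜 := ℂ) M with hf
  have h1 : (inner ℂ (f v) (f v) : ℂ) = inner ℂ v (toEuclideanCLM (𝕜 := ℂ) (star M * M) v) := by
    rw [_root_.map_mul, map_star, ContinuousLinearMap.star_eq_adjoint,
      ContinuousLinearMap.mul_apply, ContinuousLinearMap.adjoint_inner_right]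
  rw [h] at h1
  have h2' : toEuclideanCLM (𝕜 := ℂ) ((c : ℂ) • 1) v = (c : ℂ) • v := by
    apply (WithLp.equiv 2 _).injective
    simp [Matrix.toLin'_apply, Matrix.smul_mulVec, Matrix.one_mulVec]
  have h2 : (inner ℂ v (toEuclideanCLM (𝕜 := ℂ) ((c : ℂ) • 1) v) : ℂ) = (c : ℂ) * inner ℂ v v := by
    rw [h2', inner_smul_right]
  rw [h2, inner_self_eq_norm_sq_to_K, inner_self_eq_norm_sq_to_K] at h1
  have h3 : ‖f v‖ ^ 2 = c * ‖v‖ ^ 2 := by exact Complex.ofReal_inj.mp (by push_cast; exact h1)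
  have h4 : ‖f v‖ = Real.sqrt (c * ‖v‖ ^ 2) := by
    rw [← h3, Real.sqrt_sq (norm_nonneg _)]
  rw [h4, Real.sqrt_mul hc, Real.sqrt_sq (norm_nonneg _)]

lemma norm_clm_unitary {ι : Type} [Fintype ι] [DecidableEq ι]
    {M : Matrix ι ι ℂ} (h : M ∈ Matrix.unitaryGroup ι ℂ) (v : EuclideanSpace ℂ ι) :
    ‖toEuclideanCLM (𝕜 := ℂ) M v‖ = ‖v‖ := by
  have := norm_clm_of_star_mul_self M 1 zero_le_one
    (by rw [Matrix.mem_unitaryGroup_iff'] at h; simp [h]) v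
  simpa using this

lemma star_kron {d : ℕ} (M : Matrix (Fin 2) (Fin 2) ℂ) :
    star (M ⊗ₖ (1 : Matrix (Fin d) (Fin d) ℂ)) = star M ⊗ₖ 1 := by
  ext ⟨i, j⟩ ⟨k, l⟩
  simp [Matrix.star_eq_conjTranspose, Matrix.conjTranspose_apply, Matrix.one_apply]
  split_ifs <;> aesop

lemma kron_sub {d : ℕ} (A B : Matrix (Fin 2) (Fin 2) ℂ) :
    (A - B) ⊗ₖ (1 : Matrix (Fin d) (Fin d) ℂ) = A ⊗ₖ 1 - B ⊗ₖ 1 := by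
  ext ⟨i, j⟩ ⟨k, l⟩
  simp [Matrix.sub_apply]
  ring

lemma kron_star_mul_kron {d : ℕ} (A : Matrix (Fin 2) (Fin 2) ℂ) :
    star (A ⊗ₖ (1 : Matrix (Fin d) (Fin d) ℂ)) * (A ⊗ₖ 1) = (star A * A) ⊗ₖ 1 := by
  rw [star_kron, ← Matrix.mul_kronecker_mul, one_mul]

lemma kron_smul_one {d : ℕ} (c : ℂ) :
    ((c • 1 : Matrix (Fin 2) (Fin 2) ℂ) ⊗ₖ (1 : Matrix (Fin d) (Fin d) ℂ)) = c • 1 := by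
  rw [Matrix.smul_kronecker, Matrix.one_kronecker_one]

lemma algMat_mem {ι : Type} [Fintype ι] [DecidableEq ι]
    (U : ℕ → Matrix ι ι ℂ) (Q : Matrix ι ι ℂ) (hQ : Q ∈ Matrix.unitaryGroup ι ℂ) :
    ∀ n, (∀ i, i ≤ n → U i ∈ Matrix.unitaryGroup ι ℂ) →
      algMat U Q n ∈ Matrix.unitaryGroup ι ℂ
  | 0, hU => hU 0 le_rfl
  | n + 1, hU => by
    have h1 := algMat_mem U Q hQ n (fun i hi => hU i (hi.trans (Nat.le_succ n)))
    exact mul_mem (mul_mem (hU (n+1) le_rfl) hQ) h1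

lemma hybrid {ι : Type} [Fintype ι] [DecidableEq ι]
    (U : ℕ → Matrix ι ι ℂ) (Q Q' : Matrix ι ι ℂ)
    (hQ : Q ∈ Matrix.unitaryGroup ι ℂ) (hQ' : Q' ∈ Matrix.unitaryGroup ι ℂ)
    (δ : ℝ) (hδ : ∀ v : EuclideanSpace ℂ ι, ‖toEuclideanCLM (𝕜 := ℂ) (Q - Q') v‖ ≤ δ * ‖v‖)
    (ψ : EuclideanSpace ℂ ι) :
    ∀ n, (∀ i, i ≤ n → U i ∈ Matrix.unitaryGroup ι ℂ) →
      ‖toEuclideanCLM (𝕜 := ℂ) (algMat U Q n) ψ - toEuclideanCLM (𝕜 := ℂ) (algMat U Q' n) ψ‖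
        ≤ n * δ * ‖ψ‖
  | 0, hU => by simp [algMat]
  | n + 1, hU => by
    have hUn : ∀ i, i ≤ n → U i ∈ Matrix.unitaryGroup ι ℂ :=
      fun i hi => hU i (hi.trans (Nat.le_succ n))
    have ih := hybrid U Q Q' hQ hQ' δ hδ ψ n hUn
    set f := toEuclideanCLM (𝕜 := ℂ) (n := ι)
    set a := f (algMat U Q n) ψ
    set b := f (algMat U Q' n) ψ
    have hb : ‖b‖ = ‖ψ‖ := norm_clm_unitary (algMat_mem U Q' hQ' n hUn) ψ
    have expand : ∀ (R A : Matrix ι ι ℂ),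
        f (U (n+1) * R * A) ψ = f (U (n+1)) (f R (f A ψ)) := by
      intro R A
      rw [_root_.map_mul, _root_.map_mul]
      rfl
    have key : f (algMat U Q (n+1)) ψ - f (algMat U Q' (n+1)) ψ
        = f (U (n+1)) (f Q (a - b) + f (Q - Q') b) := by
      show f (U (n+1) * Q * algMat U Q n) ψ - f (U (n+1) * Q' * algMat U Q' n) ψ = _
      rw [expand, expand, ← map_sub]
      congr 1
      have e1 : f (Q - Q') = f Q - f Q' := _root_.map_sub f Q Q'
      rw [e1, ContinuousLinearMap.sub_apply, (f Q).map_sub]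
      abel
    rw [key, norm_clm_unitary (hU (n+1) le_rfl)]
    calc ‖f Q (a - b) + f (Q - Q') b‖ ≤ ‖f Q (a - b)‖ + ‖f (Q - Q') b‖ := norm_add_le _ _
      _ ≤ ‖a - b‖ + δ * ‖b‖ := by
          rw [norm_clm_unitary hQ]
          exact add_le_add_right (hδ b) _
      _ ≤ n * δ * ‖ψ‖ + δ * ‖ψ‖ := by rw [hb]; exact add_le_add_left ih _
      _ = ((n + 1 : ℕ) : ℝ) * δ * ‖ψ‖ := by push_cast; ring

lemma aux_part {ι : Type} [Fintype ι] (a b : EuclideanSpace ℂ ι) (S : Finset ι)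
    (hSa : 3/4 ≤ ∑ k ∈ S, ‖a k‖ ^ 2) (hSb : ∑ k ∈ S, ‖b k‖ ^ 2 ≤ 1/4) :
    1/8 ≤ ∑ k ∈ S, ‖a k - b k‖ ^ 2 := by
  set sA := ∑ k ∈ S, ‖a k‖ ^ 2 with hsA
  set sB := ∑ k ∈ S, ‖b k‖ ^ 2 with hsB
  set sAB := ∑ k ∈ S, ‖a k‖ * ‖b k‖ with hsAB
  have hCS : sAB ^ 2 ≤ sA * sB := Finset.sum_mul_sq_le_sq_mul_sq S _ _
  have hABnn : 0 ≤ sAB := Finset.sum_nonneg fun k _ => mul_nonneg (norm_nonneg _) (norm_nonneg _)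
  have hBnn : 0 ≤ sB := Finset.sum_nonneg fun k _ => sq_nonneg _
  have hterm : ∀ k ∈ S, ‖a k‖ ^ 2 + ‖b k‖ ^ 2 - 2 * (‖a k‖ * ‖b k‖) ≤ ‖a k - b k‖ ^ 2 := by
    intro k _
    have h1 : |‖a k‖ - ‖b k‖| ≤ ‖a k - b k‖ := abs_norm_sub_norm_le _ _
    nlinarith [sq_abs (‖a k‖ - ‖b k‖), abs_nonneg (‖a k‖ - ‖b k‖), norm_nonneg (a k - b k)]
  have hsum : sA + sB - 2 * sAB ≤ ∑ k ∈ S, ‖a k - b k‖ ^ 2 := by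
    have h2 := Finset.sum_le_sum hterm
    rw [Finset.sum_sub_distrib, Finset.sum_add_distrib, ← Finset.mul_sum] at h2
    exact h2
  nlinarith [hCS, sq_nonneg (sA + sB - 1/8 - 2 * sAB), sq_nonneg (sA + sB - 1/8 + 2 * sAB)]

lemma keyC {ι : Type} [Fintype ι] [DecidableEq ι] (a b : EuclideanSpace ℂ ι)
    (ha : ‖a‖ = 1) (hb : ‖b‖ = 1) (S T : Finset ι) (hST : Disjoint S T)
    (hSa : 3/4 ≤ ∑ k ∈ S, ‖a k‖ ^ 2) (hTb : 3/4 ≤ ∑ k ∈ T, ‖b k‖ ^ 2) :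
    1/2 ≤ ‖a - b‖ := by
  have htot : ∀ (c : EuclideanSpace ℂ ι), ‖c‖ = 1 → ∑ k, ‖c k‖ ^ 2 = 1 := by
    intro c hc
    rw [EuclideanSpace.norm_eq] at hc
    have h1 : (Real.sqrt (∑ i, ‖c i‖ ^ 2)) ^ 2 = 1 := by rw [hc]; norm_num
    rwa [Real.sq_sqrt (Finset.sum_nonneg fun k _ => sq_nonneg _)] at h1
  have hsplit : ∀ (c : EuclideanSpace ℂ ι), ‖c‖ = 1 →
      ∑ k ∈ S, ‖c k‖ ^ 2 + ∑ k ∈ T, ‖c k‖ ^ 2 ≤ 1 := by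
    intro c hc
    rw [← Finset.sum_union hST, ← htot c hc]
    exact Finset.sum_le_sum_of_subset_of_nonneg (Finset.subset_univ _)
      (fun k _ _ => sq_nonneg _)
  have hSb : ∑ k ∈ S, ‖b k‖ ^ 2 ≤ 1/4 := by
    have := hsplit b hb; linarith
  have hTa : ∑ k ∈ T, ‖a k‖ ^ 2 ≤ 1/4 := by
    have := hsplit a ha; linarith
  have hS8 : 1/8 ≤ ∑ k ∈ S, ‖a k - b k‖ ^ 2 := aux_part a b S hSa hSb
  have hT8 : 1/8 ≤ ∑ k ∈ T, ‖a k - b k‖ ^ 2 := by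
    have := aux_part b a T hTb hTa
    simpa [norm_sub_rev] using this
  have hnorm : ‖a - b‖ ^ 2 = ∑ k, ‖a k - b k‖ ^ 2 := by
    rw [EuclideanSpace.norm_eq, Real.sq_sqrt (Finset.sum_nonneg fun k _ => sq_nonneg _)]
    rfl
  have hge : 1/4 ≤ ‖a - b‖ ^ 2 := by
    rw [hnorm]
    have h1 : ∑ k ∈ S ∪ T, ‖a k - b k‖ ^ 2 ≤ ∑ k, ‖a k - b k‖ ^ 2 :=
      Finset.sum_le_sum_of_subset_of_nonneg (Finset.subset_univ _) (fun k _ _ => sq_nonneg _)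
    rw [Finset.sum_union hST] at h1
    linarith
  nlinarith [norm_nonneg (a - b)]

end Aux

theorem evaluation_phase_query_lower_bound
    (ε : ℝ) (hε0 : 0 < ε) (hε : ε ≤ 1/4) (d : ℕ) (hd : 1 ≤ d) (nq : ℕ)
    (ψ : EuclideanSpace ℂ (Fin 2 × Fin d)) (hψ : ‖ψ‖ = 1)
    (U : ℕ → Matrix (Fin 2 × Fin d) (Fin 2 × Fin d) ℂ)
    (hU : ∀ i, i ≤ nq → U i ∈ Matrix.unitaryGroup (Fin 2 × Fin d) ℂ)
    (φ : Fin 2 × Fin d → ℝ)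
    (hsucc : ∀ x : ℝ, x ∈ Set.Icc (0:ℝ) 1 →
      (3/4 : ℝ) ≤ ∑ k ∈ Finset.univ.filter (fun k => |φ k - x| < ε),
        ‖(Matrix.toEuclideanCLM (𝕜 := ℂ)
            (algMat U
              (RotC (Real.arcsin (Real.sqrt x)) ⊗ₖ (1 : Matrix (Fin d) (Fin d) ℂ)) nq)
            ψ) k‖ ^ 2) :
    1 / (16 * ε) ≤ (nq : ℝ) := by
  have hπpos := Real.pi_pos
  have hπ4 := Real.pi_le_four
  set m := Nat.floor (1/(2*ε)) with hm
  have h2ε : (0:ℝ) < 2*ε := by linarith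
  have hmle : (m:ℝ) ≤ 1/(2*ε) := Nat.floor_le (by positivity)
  have hmge : 1/(4*ε) ≤ (m:ℝ) := by
    have h1 : 1/(2*ε) - 1 < (m:ℝ) := Nat.sub_one_lt_floor _
    have h2 : (1:ℝ) ≤ 1/(4*ε) := by rw [le_div_iff₀ (by linarith)]; linarith
    have h3 : 1/(2*ε) - 1/(4*ε) = 1/(4*ε) := by field_simp; ring
    linarith
  set θf : ℕ → ℝ := fun j => Real.arcsin (Real.sqrt (2*ε*j)) with hθf
  have hx01 : ∀ j : ℕ, j ≤ m → (2*ε*(j:ℝ)) ∈ Set.Icc (0:ℝ) 1 := by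
    intro j hj
    have hjm : (j:ℝ) ≤ m := Nat.cast_le.mpr hj
    constructor
    · positivity
    · calc 2*ε*(j:ℝ) ≤ 2*ε*(m:ℝ) := by nlinarith
        _ ≤ 2*ε*(1/(2*ε)) := by nlinarith
        _ = 1 := by field_simp
  have hstep : ∀ j, j < m → 1/2 ≤ (nq:ℝ) * (θf (j+1) - θf j) := by
    intro j hj
    have hxI := hx01 j hj.le
    have hyI := hx01 (j+1) hj
    set x := 2*ε*(j:ℝ) with hxdef
    set y := 2*ε*((j+1:ℕ):ℝ) with hydef
    set Q := RotC (Real.arcsin (Real.sqrt x)) ⊗ₖ (1 : Matrix (Fin d) (Fin d) ℂ) with hQdef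
    set Q' := RotC (Real.arcsin (Real.sqrt y)) ⊗ₖ (1 : Matrix (Fin d) (Fin d) ℂ) with hQ'def
    have hQu : Q ∈ Matrix.unitaryGroup (Fin 2 × Fin d) ℂ := by
      rw [Matrix.mem_unitaryGroup_iff', hQdef, kron_star_mul_kron, rot_star_mul,
        Matrix.one_kronecker_one]
    have hQ'u : Q' ∈ Matrix.unitaryGroup (Fin 2 × Fin d) ℂ := by
      rw [Matrix.mem_unitaryGroup_iff', hQ'def, kron_star_mul_kron, rot_star_mul,
        Matrix.one_kronecker_one]
    have hθj : θf j = Real.arcsin (Real.sqrt x) := rfl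
    have hθj1 : θf (j+1) = Real.arcsin (Real.sqrt y) := by
      rw [hθf, hydef]
    set δ := θf (j+1) - θf j with hδdef
    have hδnn : 0 ≤ δ := by
      rw [hδdef]
      have : θf j ≤ θf (j+1) := by
        apply Real.monotone_arcsin
        apply Real.sqrt_le_sqrt
        push_cast
        nlinarith
      linarith
    have hδ : ∀ v : EuclideanSpace ℂ (Fin 2 × Fin d),
        ‖Matrix.toEuclideanCLM (𝕜 := ℂ) (Q - Q') v‖ ≤ δ * ‖v‖ := by
      intro v
      set t := Real.arcsin (Real.sqrt x) - Real.arcsin (Real.sqrt y) with ht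
      have hc : (0:ℝ) ≤ 2 - 2 * Real.cos t := by nlinarith [Real.cos_le_one t]
      have hQQ' : Q - Q' = (RotC (Real.arcsin (Real.sqrt x))
          - RotC (Real.arcsin (Real.sqrt y))) ⊗ₖ (1 : Matrix (Fin d) (Fin d) ℂ) := by
        rw [kron_sub]
      have hsm : star (Q - Q') * (Q - Q') = (((2 - 2 * Real.cos t : ℝ)) : ℂ) • 1 := by
        rw [hQQ', kron_star_mul_kron, rotdiff_star_mul, kron_smul_one]
      have := norm_clm_of_star_mul_self _ _ hc hsm v
      rw [this]
      have hsqle : Real.sqrt (2 - 2 * Real.cos t) ≤ δ := by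
        have h1 : 2 - 2 * Real.cos t ≤ t^2 := by
          nlinarith [Real.one_sub_sq_div_two_le_cos (x := t)]
        have h2 : Real.sqrt (2 - 2 * Real.cos t) ≤ Real.sqrt (t^2) :=
          Real.sqrt_le_sqrt h1
        rw [Real.sqrt_sq_eq_abs] at h2
        have h3 : |t| = δ := by
          rw [ht, hδdef, hθj, hθj1, abs_sub_comm]
          have h4 : 0 ≤ Real.arcsin (Real.sqrt y) - Real.arcsin (Real.sqrt x) := by
            have h5 := hδnn
            rw [hδdef, hθj, hθj1] at h5
            linarith
          exact abs_of_nonneg h4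
        rwa [h3] at h2
      exact mul_le_mul_of_nonneg_right hsqle (norm_nonneg v)
    set a := Matrix.toEuclideanCLM (𝕜 := ℂ) (algMat U Q nq) ψ with hadef
    set b := Matrix.toEuclideanCLM (𝕜 := ℂ) (algMat U Q' nq) ψ with hbdef
    have ha1 : ‖a‖ = 1 := by rw [hadef, norm_clm_unitary (algMat_mem U Q hQu nq hU), hψ]
    have hb1 : ‖b‖ = 1 := by rw [hbdef, norm_clm_unitary (algMat_mem U Q' hQ'u nq hU), hψ]
    set S := Finset.univ.filter (fun k => |φ k - x| < ε) with hSdef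
    set T := Finset.univ.filter (fun k => |φ k - y| < ε) with hTdef
    have hST : Disjoint S T := by
      rw [Finset.disjoint_left]
      intro k hkS hkT
      rw [hSdef, Finset.mem_filter] at hkS
      rw [hTdef, Finset.mem_filter] at hkT
      have h1 := hkS.2
      have h2 := hkT.2
      have hxy : y - x = 2*ε := by rw [hxdef, hydef]; push_cast; ring
      rw [abs_lt] at h1 h2
      linarith
    have hSa := hsucc x hxI
    have hTb := hsucc y hyI
    have hkey := keyC a b ha1 hb1 S T hST hSa hTb
    have hhyb := hybrid U Q Q' hQu hQ'u δ hδ ψ nq hU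
    rw [hψ, mul_one] at hhyb
    calc (1:ℝ)/2 ≤ ‖a - b‖ := hkey
      _ ≤ nq * δ := hhyb
      _ = (nq:ℝ) * (θf (j+1) - θf j) := by rw [hδdef]
  have hsum : (m:ℝ) * (1/2) ≤ (nq:ℝ) * (θf m - θf 0) := by
    calc (m:ℝ) * (1/2) = ∑ _j ∈ Finset.range m, (1/2 : ℝ) := by
          rw [Finset.sum_const, Finset.card_range, nsmul_eq_mul]
      _ ≤ ∑ j ∈ Finset.range m, (nq:ℝ) * (θf (j+1) - θf j) :=
          Finset.sum_le_sum (fun j hj => hstep j (Finset.mem_range.mp hj))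
      _ = (nq:ℝ) * ∑ j ∈ Finset.range m, (θf (j+1) - θf j) := by rw [Finset.mul_sum]
      _ = (nq:ℝ) * (θf m - θf 0) := by rw [Finset.sum_range_sub]
  have hθ0 : θf 0 = 0 := by
    rw [hθf]
    simp [Real.arcsin_zero]
  have hθm : θf m ≤ Real.pi / 2 := Real.arcsin_le_pi_div_two _
  rw [hθ0, sub_zero] at hsum
  have hnqnn : (0:ℝ) ≤ (nq:ℝ) := Nat.cast_nonneg nq
  have hA : 1/(4*ε) ≤ 4*(nq:ℝ) := by nlinarith
  rw [div_le_iff₀ (by positivity)]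
  rw [div_le_iff₀ (by positivity)] at hA
  nlinarith
end

section
/- There exists a constant c > 0 such that for every natural number m ≥ 1 the following holds: let n_q, d ≥ 1 be natural numbers and let U_0, …, U_{n_q} be unitary matrices on H = ℂ² ⊗ ℂ^{2^m} ⊗ ℂ^d (indexed by Fin 2 × Fin (2^m) × Fin d). Suppose that for every y ∈ [0,1) one has ‖ (I_2 ⊗ S_{⌊y·2^m⌋} ⊗ I_d) − U_{n_q} (R(arcsin √y) ⊗ I) U_{n_q−1} ⋯ U_1 (R(arcsin √y) ⊗ I) U_0 ‖ ≤ 1/8 in the operator norm, where R(arcsin √y) ⊗ I acts on the first (qubit) factor. Then n_q ≥ c · 2^m. -/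
open Kronecker

/-- The cyclic shift permutation matrix on `ℂ^M` sending `e_x` to `e_{(x+a) mod M}`. -/
def shiftMat (M a : ℕ) : Matrix (Fin M) (Fin M) ℂ :=
  Matrix.of fun i x => if (i : ℕ) = ((x : ℕ) + a) % M then 1 else 0

open scoped Matrix.Norms.L2Operator Fin.NatCast

namespace BitLB

open Matrix

variable {ι : Type} [Fintype ι] [DecidableEq ι]

lemma norm_le_one_of_unitary {A : Matrix ι ι ℂ} (h : Aᴴ * A = 1) : ‖A‖ ≤ 1 := by
  have h1 : ‖A‖ * ‖A‖ = ‖(1 : Matrix ι ι ℂ)‖ := by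
    rw [← Matrix.l2_opNorm_conjTranspose_mul_self, h]
  have h2 : ‖(1 : Matrix ι ι ℂ)‖ * ‖(1 : Matrix ι ι ℂ)‖ = ‖(1 : Matrix ι ι ℂ)‖ := by
    conv_rhs => rw [show (1 : Matrix ι ι ℂ) = (1 : Matrix ι ι ℂ)ᴴ * 1 by simp]
    rw [Matrix.l2_opNorm_conjTranspose_mul_self]
  have h3 : (‖A‖ * ‖A‖) * (‖A‖ * ‖A‖) = ‖A‖ * ‖A‖ := by rw [h1]; exact h2
  by_contra hc
  push_neg at hc
  have hy : 1 < ‖A‖ * ‖A‖ := by nlinarith [norm_nonneg A]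
  have hpos := mul_pos (show (0:ℝ) < ‖A‖ * ‖A‖ by linarith)
    (show (0:ℝ) < ‖A‖ * ‖A‖ - 1 by linarith)
  nlinarith [h3]

lemma norm_one_le : ‖(1 : Matrix ι ι ℂ)‖ ≤ 1 :=
  norm_le_one_of_unitary (by simp)

lemma star_kron {p q : Type} [Fintype p] [Fintype q]
    (A : Matrix p p ℂ) (B : Matrix q q ℂ) : (A ⊗ₖ B)ᴴ = Aᴴ ⊗ₖ Bᴴ := by
  ext ⟨i, j⟩ ⟨k, l⟩
  simp [Matrix.conjTranspose_apply, Matrix.kroneckerMap_apply]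

lemma kron_unitary {p q : Type} [Fintype p] [Fintype q] [DecidableEq p] [DecidableEq q]
    {A : Matrix p p ℂ} {B : Matrix q q ℂ} (hA : Aᴴ * A = 1) (hB : Bᴴ * B = 1) :
    (A ⊗ₖ B)ᴴ * (A ⊗ₖ B) = 1 := by
  rw [star_kron, ← Matrix.mul_kronecker_mul, hA, hB, Matrix.one_kronecker_one]

lemma algMat_norm_le (U : ℕ → Matrix ι ι ℂ) (Q : Matrix ι ι ℂ) (n : ℕ)
    (hU : ∀ i, i ≤ n → ‖U i‖ ≤ 1) (hQ : ‖Q‖ ≤ 1) : ‖algMat U Q n‖ ≤ 1 := by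
  induction n with
  | zero => exact hU 0 le_rfl
  | succ n ih =>
    have ih' := ih fun i hi => hU i (hi.trans (Nat.le_succ n))
    have h1 : ‖algMat U Q (n+1)‖ ≤ ‖U (n+1) * Q‖ * ‖algMat U Q n‖ := norm_mul_le _ _
    have h2 : ‖U (n+1) * Q‖ ≤ ‖U (n+1)‖ * ‖Q‖ := norm_mul_le _ _
    have h3 := hU (n+1) le_rfl
    nlinarith [norm_nonneg (algMat U Q n), norm_nonneg (U (n+1) * Q), norm_nonneg Q,
      norm_nonneg (U (n+1))]

lemma algMat_diff (U : ℕ → Matrix ι ι ℂ) (Q Q' : Matrix ι ι ℂ) (n : ℕ)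
    (hU : ∀ i, i ≤ n → ‖U i‖ ≤ 1) (hQ : ‖Q‖ ≤ 1) (hQ' : ‖Q'‖ ≤ 1) :
    ‖algMat U Q n - algMat U Q' n‖ ≤ n * ‖Q - Q'‖ := by
  induction n with
  | zero => simp [algMat]
  | succ n ih =>
    have hUn : ∀ i, i ≤ n → ‖U i‖ ≤ 1 := fun i hi => hU i (hi.trans (Nat.le_succ n))
    have ih' := ih hUn
    have key : algMat U Q (n+1) - algMat U Q' (n+1)
        = U (n+1) * ((Q - Q') * algMat U Q n + Q' * (algMat U Q n - algMat U Q' n)) := by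
      show U (n+1) * Q * algMat U Q n - U (n+1) * Q' * algMat U Q' n = _
      noncomm_ring
    rw [key]
    have h1 : ‖U (n+1) * ((Q - Q') * algMat U Q n + Q' * (algMat U Q n - algMat U Q' n))‖
        ≤ ‖U (n+1)‖ * ‖(Q - Q') * algMat U Q n + Q' * (algMat U Q n - algMat U Q' n)‖ :=
      norm_mul_le _ _
    have h2 : ‖(Q - Q') * algMat U Q n + Q' * (algMat U Q n - algMat U Q' n)‖
        ≤ ‖(Q - Q') * algMat U Q n‖ + ‖Q' * (algMat U Q n - algMat U Q' n)‖ := norm_add_le _ _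
    have h3 : ‖(Q - Q') * algMat U Q n‖ ≤ ‖Q - Q'‖ * ‖algMat U Q n‖ := norm_mul_le _ _
    have h4 : ‖Q' * (algMat U Q n - algMat U Q' n)‖
        ≤ ‖Q'‖ * ‖algMat U Q n - algMat U Q' n‖ := norm_mul_le _ _
    have h5 : ‖algMat U Q n‖ ≤ 1 := algMat_norm_le U Q n hUn hQ
    have h6 := hU (n+1) le_rfl
    have hc : ((n + 1 : ℕ) : ℝ) = (n : ℝ) + 1 := by push_cast; ring
    rw [hc]
    nlinarith [norm_nonneg (Q - Q'), norm_nonneg (algMat U Q n - algMat U Q' n),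
      norm_nonneg (U (n+1)), norm_nonneg Q',
      norm_nonneg ((Q - Q') * algMat U Q n + Q' * (algMat U Q n - algMat U Q' n)),
      norm_nonneg (algMat U Q n), Nat.cast_nonneg (α := ℝ) n]

lemma rot_unitary (θ : ℝ) : (RotC θ)ᴴ * RotC θ = 1 := by
  ext i j
  fin_cases i <;> fin_cases j <;>
    · simp [RotC, Matrix.mul_apply, Fin.sum_univ_two, Matrix.conjTranspose_apply,
        Matrix.one_apply]
      simp only [← Complex.ofReal_cos, ← Complex.ofReal_sin, Complex.conj_ofReal]
      norm_cast
      nlinarith [Real.sin_sq_add_cos_sq θ]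

/-- The matrix `!![0,-1;1,0]`. -/
noncomputable def Jmat : Matrix (Fin 2) (Fin 2) ℂ := !![0, -1; 1, 0]

lemma Jmat_unitary : (Jmat)ᴴ * Jmat = 1 := by
  ext i j
  fin_cases i <;> fin_cases j <;>
    simp [Jmat, Matrix.mul_apply, Fin.sum_univ_two, Matrix.conjTranspose_apply, Matrix.one_apply]

lemma rot_decomp (θ η : ℝ) :
    RotC θ - RotC η = ((Real.cos θ - Real.cos η : ℝ) : ℂ) • (1 : Matrix (Fin 2) (Fin 2) ℂ)
      + ((Real.sin θ - Real.sin η : ℝ) : ℂ) • Jmat := by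
  ext i j
  fin_cases i <;> fin_cases j <;>
    simp [RotC, Jmat, Matrix.one_apply] <;> (push_cast; ring)

lemma abs_cos_sub_cos_le (x y : ℝ) : |Real.cos x - Real.cos y| ≤ |x - y| := by
  rw [Real.cos_sub_cos, abs_mul, abs_mul]
  have h1 : |Real.sin ((x + y) / 2)| ≤ 1 := Real.abs_sin_le_one _
  have h2 : |Real.sin ((x - y) / 2)| ≤ |(x - y) / 2| := Real.abs_sin_le_abs
  have h3 : |(x - y) / 2| = |x - y| / 2 := by rw [abs_div]; norm_num
  rw [h3] at h2
  have h4 : |(-2 : ℝ)| = 2 := by norm_num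
  rw [h4]
  nlinarith [abs_nonneg (Real.sin ((x + y) / 2)), abs_nonneg (x - y),
    abs_nonneg (Real.sin ((x - y) / 2))]

lemma abs_sin_sub_sin_le (x y : ℝ) : |Real.sin x - Real.sin y| ≤ |x - y| := by
  rw [Real.sin_sub_sin, abs_mul, abs_mul]
  have h1 : |Real.cos ((x + y) / 2)| ≤ 1 := Real.abs_cos_le_one _
  have h2 : |Real.sin ((x - y) / 2)| ≤ |(x - y) / 2| := Real.abs_sin_le_abs
  have h3 : |(x - y) / 2| = |x - y| / 2 := by rw [abs_div]; norm_num
  rw [h3] at h2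
  have h4 : |(2 : ℝ)| = 2 := by norm_num
  rw [h4]
  nlinarith [abs_nonneg (Real.sin ((x - y) / 2)), abs_nonneg (x - y),
    abs_nonneg (Real.cos ((x + y) / 2))]

lemma rot_kron_diff_norm {κ : Type} [Fintype κ] [DecidableEq κ] (θ η : ℝ) :
    ‖RotC θ ⊗ₖ (1 : Matrix κ κ ℂ) - RotC η ⊗ₖ (1 : Matrix κ κ ℂ)‖ ≤ 2 * |θ - η| := by
  have hsub : RotC θ ⊗ₖ (1 : Matrix κ κ ℂ) - RotC η ⊗ₖ (1 : Matrix κ κ ℂ)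
      = (RotC θ - RotC η) ⊗ₖ (1 : Matrix κ κ ℂ) := by
    ext ⟨i, j⟩ ⟨k, l⟩
    simp [Matrix.kroneckerMap_apply, sub_mul]
  rw [hsub, rot_decomp, Matrix.add_kronecker, Matrix.smul_kronecker, Matrix.smul_kronecker,
    Matrix.one_kronecker_one]
  have t1 : ‖((Real.cos θ - Real.cos η : ℝ) : ℂ) • (1 : Matrix (Fin 2 × κ) (Fin 2 × κ) ℂ)
        + ((Real.sin θ - Real.sin η : ℝ) : ℂ) • (Jmat ⊗ₖ (1 : Matrix κ κ ℂ))‖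
      ≤ ‖((Real.cos θ - Real.cos η : ℝ) : ℂ) • (1 : Matrix (Fin 2 × κ) (Fin 2 × κ) ℂ)‖
        + ‖((Real.sin θ - Real.sin η : ℝ) : ℂ) • (Jmat ⊗ₖ (1 : Matrix κ κ ℂ))‖ :=
    norm_add_le _ _
  have t2 : ‖((Real.cos θ - Real.cos η : ℝ) : ℂ) • (1 : Matrix (Fin 2 × κ) (Fin 2 × κ) ℂ)‖
      = |Real.cos θ - Real.cos η| * ‖(1 : Matrix (Fin 2 × κ) (Fin 2 × κ) ℂ)‖ := by
    rw [norm_smul, Complex.norm_real, Real.norm_eq_abs]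
  have t3 : ‖((Real.sin θ - Real.sin η : ℝ) : ℂ) • (Jmat ⊗ₖ (1 : Matrix κ κ ℂ))‖
      = |Real.sin θ - Real.sin η| * ‖Jmat ⊗ₖ (1 : Matrix κ κ ℂ)‖ := by
    rw [norm_smul, Complex.norm_real, Real.norm_eq_abs]
  have t4 : ‖(1 : Matrix (Fin 2 × κ) (Fin 2 × κ) ℂ)‖ ≤ 1 := norm_one_le
  have t5 : ‖Jmat ⊗ₖ (1 : Matrix κ κ ℂ)‖ ≤ 1 :=
    norm_le_one_of_unitary (kron_unitary Jmat_unitary (by simp))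
  have t6 := abs_cos_sub_cos_le θ η
  have t7 := abs_sin_sub_sin_le θ η
  nlinarith [abs_nonneg (Real.cos θ - Real.cos η), abs_nonneg (Real.sin θ - Real.sin η),
    abs_nonneg (θ - η), norm_nonneg (1 : Matrix (Fin 2 × κ) (Fin 2 × κ) ℂ),
    norm_nonneg (Jmat ⊗ₖ (1 : Matrix κ κ ℂ))]

lemma neg_one_pow_congr {s t : ℕ} (h : s % 2 = t % 2) : ((-1 : ℂ)) ^ s = (-1) ^ t := by
  conv_lhs => rw [← Nat.div_add_mod s 2]
  conv_rhs => rw [← Nat.div_add_mod t 2]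
  rw [pow_add, pow_add, pow_mul, pow_mul, h]
  norm_num

lemma shift_eigen (M a : ℕ) (h0 : 0 < M) (hM : 2 ∣ M) :
    shiftMat M a *ᵥ (fun p : Fin M => ((-1 : ℂ) ^ (p : ℕ)))
      = ((-1 : ℂ) ^ a) • fun p : Fin M => ((-1 : ℂ) ^ (p : ℕ)) := by
  have : NeZero M := ⟨h0.ne'⟩
  funext p
  have key : ∀ p' : Fin M, ((p : ℕ) = ((p' : ℕ) + a) % M) ↔ p' = p - (a : Fin M) := by
    intro p'
    have hval : ((p' : ℕ) + a) % M = ((p' + (a : Fin M) : Fin M) : ℕ) := by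
      rw [Fin.add_def]
      simp [Fin.val_natCast, Nat.add_mod]
    rw [hval]
    constructor
    · intro h
      have hpe : p = p' + (a : Fin M) := Fin.ext h
      rw [hpe]; abel
    · intro h
      rw [h]
      have hpe : p - (a : Fin M) + (a : Fin M) = p := by abel
      rw [hpe]
  simp only [Matrix.mulVec, dotProduct, shiftMat, Matrix.of_apply, ite_mul, one_mul, zero_mul]
  rw [Finset.sum_congr rfl (fun p' _ => by rw [if_congr (key p') rfl rfl])]
  rw [Finset.sum_ite_eq' Finset.univ (p - (a : Fin M)) (fun p' : Fin M => ((-1:ℂ)) ^ (p' : ℕ))]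
  simp only [Finset.mem_univ, if_true, Pi.smul_apply, smul_eq_mul]
  set v := ((p - (a : Fin M) : Fin M) : ℕ) with hv
  have hsum : ((v + ((a : Fin M) : ℕ)) % M) = (p : ℕ) := by
    have he : (p - (a : Fin M)) + (a : Fin M) = p := by abel
    have := congrArg Fin.val he
    rwa [Fin.add_def] at this
  have ha2 : ((a : Fin M) : ℕ) % 2 = a % 2 := by
    rw [Fin.val_natCast]
    exact Nat.mod_mod_of_dvd a hM
  have hp2 : (v + ((a : Fin M) : ℕ)) % 2 = (p : ℕ) % 2 := by
    rw [← hsum]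
    exact (Nat.mod_mod_of_dvd _ hM).symm
  have hfin : v % 2 = (a + (p : ℕ)) % 2 := by omega
  rw [neg_one_pow_congr hfin, pow_add]

lemma kron_mulVec_mid {M d : ℕ} (S : Matrix (Fin M) (Fin M) ℂ) (w : Fin M → ℂ) :
    ((1 : Matrix (Fin 2) (Fin 2) ℂ) ⊗ₖ (S ⊗ₖ (1 : Matrix (Fin d) (Fin d) ℂ)))
      *ᵥ (fun q : Fin 2 × Fin M × Fin d => w q.2.1)
    = fun q => (S *ᵥ w) q.2.1 := by
  funext ⟨i, p, j⟩
  simp only [Matrix.mulVec, dotProduct, Fintype.sum_prod_type, Matrix.kroneckerMap_apply,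
    Matrix.one_apply, ite_mul, one_mul, zero_mul, mul_ite, mul_zero, mul_one]
  simp [Finset.sum_ite_eq, Finset.sum_ite_eq', mul_comm]

lemma shift_dist (m d : ℕ) (hm : 1 ≤ m) (hd : 0 < d) (k : ℕ) :
    2 ≤ ‖(1 : Matrix (Fin 2) (Fin 2) ℂ) ⊗ₖ (shiftMat (2^m) k ⊗ₖ (1 : Matrix (Fin d) (Fin d) ℂ))
        - (1 : Matrix (Fin 2) (Fin 2) ℂ) ⊗ₖ
            (shiftMat (2^m) (k+1) ⊗ₖ (1 : Matrix (Fin d) (Fin d) ℂ))‖ := by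
  have h0 : 0 < 2 ^ m := pow_pos (by norm_num) m
  have h2 : 2 ∣ 2 ^ m := dvd_pow_self 2 (by omega)
  set D := (1 : Matrix (Fin 2) (Fin 2) ℂ) ⊗ₖ (shiftMat (2^m) k ⊗ₖ (1 : Matrix (Fin d) (Fin d) ℂ))
        - (1 : Matrix (Fin 2) (Fin 2) ℂ) ⊗ₖ
            (shiftMat (2^m) (k+1) ⊗ₖ (1 : Matrix (Fin d) (Fin d) ℂ)) with hD
  set w : Fin (2^m) → ℂ := fun p => (-1 : ℂ) ^ (p : ℕ) with hw
  have hDx : D *ᵥ (fun q : Fin 2 × Fin (2^m) × Fin d => w q.2.1)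
      = ((2 : ℂ) * (-1) ^ k) • (fun q : Fin 2 × Fin (2^m) × Fin d => w q.2.1) := by
    rw [hD, Matrix.sub_mulVec, kron_mulVec_mid (shiftMat (2^m) k) w,
      kron_mulVec_mid (shiftMat (2^m) (k+1)) w]
    have e1 : shiftMat (2^m) k *ᵥ w = ((-1 : ℂ) ^ k) • w := shift_eigen _ _ h0 h2
    have e2 : shiftMat (2^m) (k+1) *ᵥ w = ((-1 : ℂ) ^ (k+1)) • w := shift_eigen _ _ h0 h2
    rw [e1, e2]
    funext q
    simp only [Pi.sub_apply, Pi.smul_apply, smul_eq_mul, pow_succ]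
    ring
  set xE : EuclideanSpace ℂ (Fin 2 × Fin (2^m) × Fin d) :=
    (EuclideanSpace.equiv (Fin 2 × Fin (2^m) × Fin d) ℂ).symm
      (fun q : Fin 2 × Fin (2^m) × Fin d => w q.2.1) with hxE
  have hle := Matrix.l2_opNorm_mulVec D xE
  have hlhs : (EuclideanSpace.equiv (Fin 2 × Fin (2^m) × Fin d) ℂ).symm (D *ᵥ xE)
      = ((2 : ℂ) * (-1) ^ k) • xE := by
    have hmv : D *ᵥ (xE : (Fin 2 × Fin (2^m) × Fin d) → ℂ)
        = ((2 : ℂ) * (-1) ^ k) • (fun q : Fin 2 × Fin (2^m) × Fin d => w q.2.1) := hDx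
    rw [hmv, hxE, ← ContinuousLinearEquiv.map_smul]
  rw [hlhs] at hle
  have hnx : ‖((2 : ℂ) * (-1) ^ k) • xE‖ = 2 * ‖xE‖ := by
    rw [norm_smul]
    congr 1
    simp [norm_mul]
  rw [hnx] at hle
  have hxE0 : xE ≠ 0 := by
    intro h
    have hx0 : (fun q : Fin 2 × Fin (2^m) × Fin d => w q.2.1) = 0 := by
      have := congrArg (EuclideanSpace.equiv (Fin 2 × Fin (2^m) × Fin d) ℂ) h
      simpa [hxE] using this
    have h1 := congrFun hx0 ⟨0, ⟨0, h0⟩, ⟨0, hd⟩⟩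
    simp [hw] at h1
  have hpos : 0 < ‖xE‖ := by rw [norm_pos_iff]; exact hxE0
  exact le_of_mul_le_mul_right hle hpos

end BitLB

theorem bit_query_approx_lower_bound :
    ∃ c : ℝ, 0 < c ∧
      ∀ m : ℕ, 1 ≤ m → ∀ nq d : ℕ, 1 ≤ d →
        ∀ U : ℕ → Matrix (Fin 2 × Fin (2 ^ m) × Fin d) (Fin 2 × Fin (2 ^ m) × Fin d) ℂ,
          (∀ i, i ≤ nq → U i ∈ Matrix.unitaryGroup (Fin 2 × Fin (2 ^ m) × Fin d) ℂ) →
          (∀ y : ℝ, 0 ≤ y → y < 1 →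
            ‖Matrix.toEuclideanCLM (𝕜 := ℂ)
                ((1 : Matrix (Fin 2) (Fin 2) ℂ) ⊗ₖ
                    (shiftMat (2 ^ m) (Nat.floor (y * 2 ^ m)) ⊗ₖ (1 : Matrix (Fin d) (Fin d) ℂ))
                  - algMat U
                      (RotC (Real.arcsin (Real.sqrt y)) ⊗ₖ
                        (1 : Matrix (Fin (2 ^ m) × Fin d) (Fin (2 ^ m) × Fin d) ℂ)) nq)‖
              ≤ 1 / 8) →
          c * 2 ^ m ≤ (nq : ℝ) := by
  refine ⟨1/8, by norm_num, ?_⟩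
  intro m hm nq d hd U hUmem happrox
  have h0 : 0 < 2 ^ m := pow_pos (by norm_num) m
  have hM2 : 2 ≤ 2 ^ m := by
    calc 2 = 2 ^ 1 := (pow_one 2).symm
      _ ≤ 2 ^ m := Nat.pow_le_pow_right (by norm_num) hm
  have hUnorm : ∀ i, i ≤ nq → ‖U i‖ ≤ 1 := by
    intro i hi
    have hmem := (Matrix.mem_unitaryGroup_iff').mp (hUmem i hi)
    exact BitLB.norm_le_one_of_unitary (by rwa [Matrix.star_eq_conjTranspose] at hmem)
  have hQnorm : ∀ t : ℝ,
      ‖RotC t ⊗ₖ (1 : Matrix (Fin (2^m) × Fin d) (Fin (2^m) × Fin d) ℂ)‖ ≤ 1 :=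
    fun t => BitLB.norm_le_one_of_unitary (BitLB.kron_unitary (BitLB.rot_unitary t) (by simp))
  set θf : ℕ → ℝ := fun k => Real.arcsin (Real.sqrt ((k : ℝ) / (2:ℝ)^m)) with hθf
  set Sh : ℕ → Matrix (Fin 2 × Fin (2^m) × Fin d) (Fin 2 × Fin (2^m) × Fin d) ℂ := fun k =>
    (1 : Matrix (Fin 2) (Fin 2) ℂ) ⊗ₖ
      (shiftMat (2^m) k ⊗ₖ (1 : Matrix (Fin d) (Fin d) ℂ)) with hShdef
  set A : ℕ → Matrix (Fin 2 × Fin (2^m) × Fin d) (Fin 2 × Fin (2^m) × Fin d) ℂ := fun k =>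
    algMat U (RotC (θf k) ⊗ₖ
      (1 : Matrix (Fin (2^m) × Fin d) (Fin (2^m) × Fin d) ℂ)) nq with hAdef
  have happ : ∀ k : ℕ, k < 2^m → ‖Sh k - A k‖ ≤ 1/8 := by
    intro k hk
    have hy0 : (0:ℝ) ≤ (k : ℝ) / (2:ℝ)^m := by positivity
    have hy1 : (k : ℝ) / (2:ℝ)^m < 1 := by
      rw [div_lt_one (by positivity)]
      exact_mod_cast hk
    have h := happrox ((k : ℝ) / (2:ℝ)^m) hy0 hy1
    have hfl : Nat.floor ((k : ℝ) / (2:ℝ)^m * 2 ^ m) = k := by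
      rw [div_mul_cancel₀]
      · exact Nat.floor_natCast k
      · positivity
    rw [hfl] at h
    exact h
  have hmono : ∀ k : ℕ, θf k ≤ θf (k+1) := by
    intro k
    apply Real.monotone_arcsin
    apply Real.sqrt_le_sqrt
    have : (k : ℝ) ≤ (k : ℝ) + 1 := by linarith
    have hpow : (0:ℝ) < (2:ℝ)^m := by positivity
    rw [div_le_div_iff₀ hpow hpow]
    push_cast
    nlinarith
  have hstep : ∀ k : ℕ, k + 1 < 2^m → (7/4 : ℝ) ≤ 2 * (nq : ℝ) * (θf (k+1) - θf k) := by
    intro k hk1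
    have hk : k < 2^m := by omega
    have hdist : 2 ≤ ‖Sh k - Sh (k+1)‖ := BitLB.shift_dist m d hm (by omega) k
    have hsplit : Sh k - Sh (k+1) = (Sh k - A k) + (A k - A (k+1)) + (A (k+1) - Sh (k+1)) := by
      abel
    have htri : ‖Sh k - Sh (k+1)‖
        ≤ ‖Sh k - A k‖ + ‖A k - A (k+1)‖ + ‖A (k+1) - Sh (k+1)‖ := by
      rw [hsplit]; exact norm_add₃_le
    have hd1 := happ k hk
    have hd2 : ‖A (k+1) - Sh (k+1)‖ ≤ 1/8 := by
      rw [norm_sub_rev]; exact happ (k+1) hk1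
    have hmid : ‖A k - A (k+1)‖ ≤ (nq : ℝ) * (2 * (θf (k+1) - θf k)) := by
      have h := BitLB.algMat_diff U
        (RotC (θf k) ⊗ₖ (1 : Matrix (Fin (2^m) × Fin d) (Fin (2^m) × Fin d) ℂ))
        (RotC (θf (k+1)) ⊗ₖ (1 : Matrix (Fin (2^m) × Fin d) (Fin (2^m) × Fin d) ℂ))
        nq hUnorm (hQnorm _) (hQnorm _)
      have h2 := BitLB.rot_kron_diff_norm (κ := Fin (2^m) × Fin d) (θf k) (θf (k+1))
      have habs : |θf k - θf (k+1)| = θf (k+1) - θf k := by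
        rw [abs_sub_comm]
        exact abs_of_nonneg (by linarith [hmono k])
      rw [habs] at h2
      calc ‖A k - A (k+1)‖
          ≤ (nq : ℝ) * ‖RotC (θf k) ⊗ₖ (1 : Matrix (Fin (2^m) × Fin d) (Fin (2^m) × Fin d) ℂ)
              - RotC (θf (k+1)) ⊗ₖ (1 : Matrix (Fin (2^m) × Fin d) (Fin (2^m) × Fin d) ℂ)‖ := h
        _ ≤ (nq : ℝ) * (2 * (θf (k+1) - θf k)) := by
            apply mul_le_mul_of_nonneg_left h2 (Nat.cast_nonneg nq)
    linarith
  -- sum over k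
  set N := 2^m - 1 with hN
  have hsum1 : (N : ℝ) * (7/4)
      ≤ ∑ k ∈ Finset.range N, 2 * (nq : ℝ) * (θf (k+1) - θf k) := by
    have := Finset.sum_le_sum (s := Finset.range N) (f := fun _ : ℕ => (7/4 : ℝ))
      (g := fun k => 2 * (nq : ℝ) * (θf (k+1) - θf k))
      (fun k hkmem => hstep k (by have := Finset.mem_range.mp hkmem; omega))
    simpa [Finset.sum_const, Finset.card_range, nsmul_eq_mul, mul_comm] using this
  have hsum2 : ∑ k ∈ Finset.range N, 2 * (nq : ℝ) * (θf (k+1) - θf k)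
      = 2 * (nq : ℝ) * (θf N - θf 0) := by
    rw [← Finset.mul_sum, Finset.sum_range_sub (f := θf)]
  have hθ0 : θf 0 = 0 := by
    simp [hθf]
  have hθtop : θf N ≤ 2 := by
    have h1 := Real.arcsin_le_pi_div_two (Real.sqrt ((N : ℝ) / (2:ℝ)^m))
    have h2 := Real.pi_le_four
    calc θf N ≤ Real.pi / 2 := h1
      _ ≤ 2 := by linarith
  have hnq0 : (0:ℝ) ≤ (nq : ℝ) := Nat.cast_nonneg nq
  have hfinal : (N : ℝ) * (7/4) ≤ 4 * (nq : ℝ) := by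
    have : 2 * (nq : ℝ) * (θf N - θf 0) ≤ 2 * (nq : ℝ) * 2 := by
      apply mul_le_mul_of_nonneg_left _ (by linarith)
      rw [hθ0]; linarith
    linarith [hsum1, hsum2.le, hsum2.ge]
  have hNcast : (N : ℝ) = (2:ℝ)^m - 1 := by
    rw [hN]
    have : ((2^m - 1 : ℕ) : ℝ) = ((2^m : ℕ) : ℝ) - 1 := by
      rw [Nat.cast_sub (by omega)]; norm_num
    rw [this]; push_cast; ring
  have hMcast : (2:ℝ) ≤ (2:ℝ)^m := by
    calc (2:ℝ) = ((2:ℕ):ℝ) := by norm_num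
      _ ≤ ((2^m:ℕ):ℝ) := by exact_mod_cast hM2
      _ = (2:ℝ)^m := by push_cast; ring
  rw [hNcast] at hfinal
  linarith
end

section
/- Let N ≥ 1, d₁ ≥ 1, d₂ ≥ 1 and n_q be natural numbers. For Θ = (θ_0, …, θ_{N−1}) ∈ ℝ^N let Q_Θ be the unitary matrix on ℂ^{d₁} ⊗ ℂ^N ⊗ ℂ² ⊗ ℂ^{d₂} (indexed by Fin d₁ × Fin N × Fin 2 × Fin d₂) defined on basis vectors by Q_Θ (e_i ⊗ e_j ⊗ e_0 ⊗ e_l) = e_i ⊗ e_j ⊗ (cos θ_j · e_0 + sin θ_j · e_1) ⊗ e_l and Q_Θ (e_i ⊗ e_j ⊗ e_1 ⊗ e_l) = e_i ⊗ e_j ⊗ (−sin θ_j · e_0 + cos θ_j · e_1) ⊗ e_l. Then for any unitary matrices U_0, …, U_{n_q} on this space (not depending on Θ) and any vector ψ, there exist N-variate trigonometric polynomials T_k of degree at most n_q, one for each basis index k, such that for all Θ ∈ ℝ^N: U_{n_q} Q_Θ U_{n_q−1} ⋯ U_1 Q_Θ U_0 ψ = ∑_k T_k(Θ) · e_k, i.e.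 every coordinate of the final state is a trigonometric polynomial of degree at most n_q in (θ_0, …, θ_{N−1}). -/
/-- `T` is an `N`-variate trigonometric polynomial of degree at most `deg`:
`T Θ = ∑_{ν ∈ J} c_ν exp(i ∑_k ν_k Θ_k)` with `∑_k |ν_k| ≤ deg` for all `ν ∈ J`. -/
def IsTrigPoly (N deg : ℕ) (T : (Fin N → ℝ) → ℂ) : Prop :=
  ∃ (J : Finset (Fin N → ℤ)) (c : (Fin N → ℤ) → ℂ),
    (∀ ν ∈ J, (∑ k, (ν k).natAbs) ≤ deg) ∧
    ∀ Θ : Fin N → ℝ, T Θ = ∑ ν ∈ J, c ν *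
      Complex.exp (Complex.I * ∑ k, (ν k : ℂ) * (Θ k : ℂ))

/-- The phase query with angles `Θ`, acting on the second and third tensor factors of
`ℂ^{d₁} ⊗ ℂ^N ⊗ ℂ² ⊗ ℂ^{d₂}`: it maps `e_i ⊗ e_j ⊗ e_b ⊗ e_l` to
`e_i ⊗ e_j ⊗ (R(θ_j) e_b) ⊗ e_l`. -/
noncomputable def phaseQueryΘ (d₁ N d₂ : ℕ) (Θ : Fin N → ℝ) :
    Matrix (Fin d₁ × Fin N × Fin 2 × Fin d₂) (Fin d₁ × Fin N × Fin 2 × Fin d₂) ℂ :=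
  Matrix.of fun p q =>
    (if p.1 = q.1 ∧ p.2.1 = q.2.1 ∧ p.2.2.2 = q.2.2.2 then (1 : ℂ) else 0) *
      RotC (Θ q.2.1) p.2.2.1 q.2.2.1

open Classical in
lemma isTrigPoly_const (N d : ℕ) (a : ℂ) : IsTrigPoly N d (fun _ => a) := by
  refine ⟨{fun _ => 0}, fun _ => a, ?_, ?_⟩
  · intro ν hν
    simp only [Finset.mem_singleton] at hν
    subst hν; simp
  · intro Θ; simp

open Classical in
lemma isTrigPoly_add {N d : ℕ} {T S : (Fin N → ℝ) → ℂ}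
    (hT : IsTrigPoly N d T) (hS : IsTrigPoly N d S) :
    IsTrigPoly N d (fun Θ => T Θ + S Θ) := by
  obtain ⟨J₁, c₁, h₁, e₁⟩ := hT
  obtain ⟨J₂, c₂, h₂, e₂⟩ := hS
  refine ⟨J₁ ∪ J₂,
    fun ν => (if ν ∈ J₁ then c₁ ν else 0) + (if ν ∈ J₂ then c₂ ν else 0), ?_, ?_⟩
  · intro ν hν
    rcases Finset.mem_union.1 hν with h | h
    · exact h₁ ν h
    · exact h₂ ν h
  · intro Θ
    have key : ∀ (J : Finset (Fin N → ℤ)) (c : (Fin N → ℤ) → ℂ), J ⊆ J₁ ∪ J₂ →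
        (∑ ν ∈ J₁ ∪ J₂, (if ν ∈ J then c ν else 0) *
          Complex.exp (Complex.I * ∑ k, (ν k : ℂ) * (Θ k : ℂ)))
        = ∑ ν ∈ J, c ν * Complex.exp (Complex.I * ∑ k, (ν k : ℂ) * (Θ k : ℂ)) := by
      intro J c hJ
      rw [← Finset.sum_subset hJ]
      · exact Finset.sum_congr rfl fun ν hν => by simp [hν]
      · intro ν _ hν; simp [hν]
    simp only [add_mul, Finset.sum_add_distrib,
      key J₁ c₁ Finset.subset_union_left, key J₂ c₂ Finset.subset_union_right,
      e₁ Θ, e₂ Θ]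
lemma isTrigPoly_mono {N d d' : ℕ} {T : (Fin N → ℝ) → ℂ}
    (h : IsTrigPoly N d T) (hd : d ≤ d') : IsTrigPoly N d' T := by
  obtain ⟨J, c, h1, h2⟩ := h
  exact ⟨J, c, fun ν hν => (h1 ν hν).trans hd, h2⟩

lemma isTrigPoly_congr {N d : ℕ} {T S : (Fin N → ℝ) → ℂ}
    (h : IsTrigPoly N d T) (hTS : ∀ Θ, T Θ = S Θ) : IsTrigPoly N d S := by
  obtain ⟨J, c, h1, h2⟩ := h
  exact ⟨J, c, h1, fun Θ => (hTS Θ) ▸ h2 Θ⟩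

open Classical in
lemma isTrigPoly_of_indexed {N d : ℕ} {ι : Type} [Fintype ι]
    (ν : ι → Fin N → ℤ) (c : ι → ℂ)
    (h : ∀ j, (∑ k, (ν j k).natAbs) ≤ d) :
    IsTrigPoly N d (fun Θ => ∑ j, c j *
      Complex.exp (Complex.I * ∑ k, (ν j k : ℂ) * (Θ k : ℂ))) := by
  refine ⟨Finset.image ν Finset.univ,
    fun μ => ∑ j ∈ Finset.univ.filter (fun j => ν j = μ), c j, ?_, ?_⟩
  · intro μ hμ
    obtain ⟨j, _, rfl⟩ := Finset.mem_image.1 hμ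
    exact h j
  · intro Θ
    dsimp only
    rw [← Finset.sum_fiberwise_of_maps_to (fun j _ => Finset.mem_image_of_mem ν (Finset.mem_univ j))
      (fun j => c j * Complex.exp (Complex.I * ∑ k, (ν j k : ℂ) * (Θ k : ℂ)))]
    refine Finset.sum_congr rfl fun μ _ => ?_
    rw [Finset.sum_mul]
    refine Finset.sum_congr rfl fun j hj => ?_
    rw [(Finset.mem_filter.1 hj).2]

lemma isTrigPoly_mul {N d₁ d₂ : ℕ} {T S : (Fin N → ℝ) → ℂ}
    (hT : IsTrigPoly N d₁ T) (hS : IsTrigPoly N d₂ S) :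
    IsTrigPoly N (d₁ + d₂) (fun Θ => T Θ * S Θ) := by
  obtain ⟨J₁, c₁, h₁, e₁⟩ := hT
  obtain ⟨J₂, c₂, h₂, e₂⟩ := hS
  have hdeg : ∀ p : (J₁ ×ˢ J₂ : Finset _),
      (∑ k, ((p.1.1 + p.1.2) k).natAbs) ≤ d₁ + d₂ := by
    intro p
    have hp := Finset.mem_product.1 p.2
    calc (∑ k, ((p.1.1 + p.1.2) k).natAbs)
        ≤ ∑ k, ((p.1.1 k).natAbs + (p.1.2 k).natAbs) :=
          Finset.sum_le_sum fun k _ => Int.natAbs_add_le _ _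
      _ = (∑ k, (p.1.1 k).natAbs) + ∑ k, (p.1.2 k).natAbs :=
          Finset.sum_add_distrib
      _ ≤ d₁ + d₂ := Nat.add_le_add (h₁ _ hp.1) (h₂ _ hp.2)
  refine isTrigPoly_congr (isTrigPoly_of_indexed
    (fun p : (J₁ ×ˢ J₂ : Finset _) => p.1.1 + p.1.2)
    (fun p => c₁ p.1.1 * c₂ p.1.2) hdeg) fun Θ => ?_
  rw [e₁ Θ, e₂ Θ, Finset.sum_mul_sum, ← Finset.sum_product', ← Finset.sum_attach (J₁ ×ˢ J₂)]
  refine Finset.sum_congr rfl fun p _ => ?_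
  have : (Complex.I * ∑ k, (((p.1.1 + p.1.2) k : ℤ) : ℂ) * (Θ k : ℂ))
      = Complex.I * (∑ k, (p.1.1 k : ℂ) * Θ k) +
        Complex.I * ∑ k, (p.1.2 k : ℂ) * Θ k := by
    simp only [Pi.add_apply, Int.cast_add, add_mul, Finset.sum_add_distrib, mul_add]
  rw [this, Complex.exp_add]
  ring
lemma isTrigPoly_zero (N d : ℕ) : IsTrigPoly N d (fun _ => 0) :=
  ⟨∅, fun _ => 0, by simp, by simp⟩

lemma isTrigPoly_sum {N d : ℕ} {ι : Type*} (s : Finset ι)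
    (f : ι → (Fin N → ℝ) → ℂ) (h : ∀ i ∈ s, IsTrigPoly N d (f i)) :
    IsTrigPoly N d (fun Θ => ∑ i ∈ s, f i Θ) := by
  classical
  induction s using Finset.induction_on with
  | empty => simpa using isTrigPoly_zero N d
  | insert a s hx ih =>
    refine isTrigPoly_congr (isTrigPoly_add (h a (Finset.mem_insert_self a s))
      (ih fun i hi => h i (Finset.mem_insert_of_mem hi))) fun Θ => ?_
    rw [Finset.sum_insert hx]

lemma isTrigPoly_smul {N d : ℕ} {T : (Fin N → ℝ) → ℂ} (a : ℂ)
    (h : IsTrigPoly N d T) : IsTrigPoly N d (fun Θ => a * T Θ) := by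
  obtain ⟨J, c, h1, h2⟩ := h
  exact ⟨J, fun ν => a * c ν, h1, fun Θ => by dsimp only; rw [h2 Θ, Finset.mul_sum]; simp [mul_assoc]⟩

lemma sum_single_natAbs {N : ℕ} (j : Fin N) (z : ℤ) :
    (∑ k, ((Pi.single j z : Fin N → ℤ) k).natAbs) = z.natAbs := by
  classical
  rw [Finset.sum_eq_single j]
  · simp
  · intro k _ hk; simp [Pi.single_eq_of_ne hk]
  · simp

lemma sum_single_mul {N : ℕ} (j : Fin N) (z : ℤ) (Θ : Fin N → ℝ) :
    (∑ k, (((Pi.single j z : Fin N → ℤ) k : ℂ)) * (Θ k : ℂ)) = (z : ℂ) * Θ j := by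
  classical
  rw [Finset.sum_eq_single j]
  · simp
  · intro k _ hk; simp [Pi.single_eq_of_ne hk]
  · simp

lemma isTrigPoly_cos {N : ℕ} (j : Fin N) :
    IsTrigPoly N 1 (fun Θ => (Real.cos (Θ j) : ℂ)) := by
  classical
  refine ⟨{Pi.single j 1, Pi.single j (-1)}, fun _ => 1/2, ?_, ?_⟩
  · intro ν hν
    rcases Finset.mem_insert.1 hν with rfl | hν
    · simp [sum_single_natAbs]
    · rw [Finset.mem_singleton.1 hν]; simp [sum_single_natAbs]
  · intro Θ
    have hne : (Pi.single j 1 : Fin N → ℤ) ≠ Pi.single j (-1) := by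
      intro h
      have := congrFun h j
      simp at this
    dsimp only
    rw [Finset.sum_insert (by simpa using hne), Finset.sum_singleton,
      sum_single_mul, sum_single_mul]
    rw [Complex.ofReal_cos, Complex.cos]
    push_cast
    ring_nf

lemma isTrigPoly_sin {N : ℕ} (j : Fin N) :
    IsTrigPoly N 1 (fun Θ => (Real.sin (Θ j) : ℂ)) := by
  classical
  refine ⟨{Pi.single j 1, Pi.single j (-1)},
    fun ν => if ν = Pi.single j 1 then -Complex.I/2 else Complex.I/2, ?_, ?_⟩
  · intro ν hν
    rcases Finset.mem_insert.1 hν with rfl | hν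
    · simp [sum_single_natAbs]
    · rw [Finset.mem_singleton.1 hν]; simp [sum_single_natAbs]
  · intro Θ
    have hne : (Pi.single j 1 : Fin N → ℤ) ≠ Pi.single j (-1) := by
      intro h
      have := congrFun h j
      simp at this
    dsimp only
    rw [Finset.sum_insert (by simpa using hne), Finset.sum_singleton,
      sum_single_mul, sum_single_mul, if_pos rfl, if_neg (Ne.symm hne)]
    rw [Complex.ofReal_sin, Complex.sin]
    push_cast
    ring_nf

lemma isTrigPoly_neg {N d : ℕ} {T : (Fin N → ℝ) → ℂ}
    (h : IsTrigPoly N d T) : IsTrigPoly N d (fun Θ => -(T Θ)) := by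
  refine isTrigPoly_congr (isTrigPoly_smul (-1) h) fun Θ => by ring

lemma isTrigPoly_rot {N : ℕ} (j : Fin N) (a b : Fin 2) :
    IsTrigPoly N 1 (fun Θ => RotC (Θ j) a b) := by
  fin_cases a <;> fin_cases b <;>
    simp only [RotC, Matrix.cons_val', Matrix.cons_val_zero, Matrix.cons_val_one,
      Matrix.head_cons, Matrix.empty_val', Matrix.cons_val_fin_one, Matrix.head_fin_const]
  · exact isTrigPoly_cos j
  · exact isTrigPoly_neg (isTrigPoly_sin j)
  · exact isTrigPoly_sin j
  · exact isTrigPoly_cos j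
lemma isTrigPoly_phaseEntry (N d₁ d₂ : ℕ) (p q : Fin d₁ × Fin N × Fin 2 × Fin d₂) :
    IsTrigPoly N 1 (fun Θ => phaseQueryΘ d₁ N d₂ Θ p q) := by
  have := isTrigPoly_smul
    (if p.1 = q.1 ∧ p.2.1 = q.2.1 ∧ p.2.2.2 = q.2.2.2 then (1 : ℂ) else 0)
    (isTrigPoly_rot q.2.1 p.2.2.1 q.2.2.1)
  exact isTrigPoly_congr this fun Θ => rfl

lemma isTrigPoly_algMat (N d₁ d₂ : ℕ)
    (U : ℕ → Matrix (Fin d₁ × Fin N × Fin 2 × Fin d₂) (Fin d₁ × Fin N × Fin 2 × Fin d₂) ℂ)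
    (n : ℕ) (p q : Fin d₁ × Fin N × Fin 2 × Fin d₂) :
    IsTrigPoly N n (fun Θ => algMat U (phaseQueryΘ d₁ N d₂ Θ) n p q) := by
  induction n generalizing p q with
  | zero => exact isTrigPoly_const N 0 (U 0 p q)
  | succ n ih =>
    have key : ∀ Θ : Fin N → ℝ,
        algMat U (phaseQueryΘ d₁ N d₂ Θ) (n + 1) p q =
        ∑ r, ∑ s, U (n + 1) p r *
          (phaseQueryΘ d₁ N d₂ Θ r s * algMat U (phaseQueryΘ d₁ N d₂ Θ) n s q) := by
      intro Θ
      simp only [algMat, Matrix.mul_apply, Finset.sum_mul, mul_assoc]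
      rw [Finset.sum_comm]
    refine isTrigPoly_congr ?_ fun Θ => (key Θ).symm
    refine isTrigPoly_sum _ _ fun r _ => isTrigPoly_sum _ _ fun s _ => ?_
    refine isTrigPoly_smul _ ?_
    exact isTrigPoly_mono
      (isTrigPoly_mul (isTrigPoly_phaseEntry N d₁ d₂ r s) (ih s q)) (by omega)

theorem quantum_algorithm_coords_are_trig_polys
    (N d₁ d₂ nq : ℕ) (hN : 1 ≤ N) (hd₁ : 1 ≤ d₁) (hd₂ : 1 ≤ d₂)
    (U : ℕ → Matrix (Fin d₁ × Fin N × Fin 2 × Fin d₂) (Fin d₁ × Fin N × Fin 2 × Fin d₂) ℂ)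
    (hU : ∀ i, i ≤ nq → U i ∈ Matrix.unitaryGroup (Fin d₁ × Fin N × Fin 2 × Fin d₂) ℂ)
    (ψ : Fin d₁ × Fin N × Fin 2 × Fin d₂ → ℂ) :
    ∃ T : (Fin d₁ × Fin N × Fin 2 × Fin d₂) → (Fin N → ℝ) → ℂ,
      (∀ k, IsTrigPoly N nq (T k)) ∧
      ∀ (Θ : Fin N → ℝ) (k : Fin d₁ × Fin N × Fin 2 × Fin d₂),
        (algMat U (phaseQueryΘ d₁ N d₂ Θ) nq).mulVec ψ k = T k Θ := by
  refine ⟨fun k Θ => (algMat U (phaseQueryΘ d₁ N d₂ Θ) nq).mulVec ψ k,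
    fun k => ?_, fun Θ k => rfl⟩
  have key : ∀ Θ : Fin N → ℝ,
      (algMat U (phaseQueryΘ d₁ N d₂ Θ) nq).mulVec ψ k =
      ∑ j, ψ j * algMat U (phaseQueryΘ d₁ N d₂ Θ) nq k j := by
    intro Θ
    simp [Matrix.mulVec, dotProduct, mul_comm]
  refine isTrigPoly_congr ?_ fun Θ => (key Θ).symm
  exact isTrigPoly_sum _ _ fun j _ =>
    isTrigPoly_smul _ (isTrigPoly_algMat N d₁ d₂ U nq k j)
end

section
/- There exists a constant c > 0 with the following property. Let d ≥ 1 be a natural number and let t : ℝ → ℝ be a trigonometric polynomial of degree at most d with t(θ) ∈ [0,1] for all θ ∈ ℝ. Suppose x ∈ [0,1] and Δ ≠ 0 satisfy x + Δ ∈ [0,1], t(arcsin √x) ≥ 3/4 and t(arcsin √(x+Δ)) ≤ 1/4. Let m be the element of {x, x + Δ} for which |m − 1/2| is maximal. Then d ≥ c · ( √(1/|Δ|) + √(m(1−m)) / |Δ| ). -/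
/-- `t : ℝ → ℝ` is a (real-valued) trigonometric polynomial of degree at most `d`. -/
def IsTrigPolyDeg (d : ℕ) (t : ℝ → ℝ) : Prop :=
  ∃ c : ℤ → ℂ, (∀ n : ℤ, (d : ℤ) < |n| → c n = 0) ∧
    ∀ θ : ℝ, (t θ : ℂ) =
      ∑ n ∈ Finset.Icc (-(d : ℤ)) (d : ℤ), c n * Complex.exp (n * θ * Complex.I)

section Bernstein

open Complex Metric Finset

lemma exp_I_lip (r a b : ℝ) :
    ‖Complex.exp (r * a * Complex.I) - Complex.exp (r * b * Complex.I)‖ ≤ |r| * |a - b| := by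
  have h : ∀ θ : ℝ, HasDerivAt (fun θ : ℝ => Complex.exp ((r:ℂ) * θ * Complex.I))
      ((r * Complex.I) * Complex.exp ((r:ℂ) * θ * Complex.I)) θ := by
    intro θ
    have h1 : HasDerivAt (fun z : ℂ => Complex.exp ((r:ℂ) * z * Complex.I))
        ((r * Complex.I) * Complex.exp ((r:ℂ) * (θ:ℂ) * Complex.I)) (θ:ℂ) := by
      have h2 : HasDerivAt (fun z : ℂ => (r:ℂ) * z * Complex.I) (r * Complex.I) (θ:ℂ) := by
        simpa [mul_comm, mul_assoc, mul_left_comm] using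
          ((hasDerivAt_id (θ:ℂ)).const_mul ((r:ℂ) * Complex.I))
      simpa [mul_comm] using h2.cexp
    exact h1.comp_ofReal
  have key := convex_univ.norm_image_sub_le_of_norm_deriv_le (s := Set.univ)
    (f := fun θ : ℝ => Complex.exp ((r:ℂ) * θ * Complex.I)) (C := |r|)
    (fun x _ => (h x).differentiableAt)
    (fun x _ => by
      rw [(h x).deriv]
      have : ((r:ℂ) * (x:ℂ) * Complex.I) = ((r*x : ℝ) : ℂ) * Complex.I := by push_cast; ring
      simp [this, norm_mul, Complex.norm_exp_ofReal_mul_I])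
    (Set.mem_univ b) (Set.mem_univ a)
  simpa [Complex.norm_real, Real.norm_eq_abs] using key

lemma bernstein_lip {d : ℕ} (hd : 1 ≤ d) {t : ℝ → ℝ} (ht : IsTrigPolyDeg d t)
    (hb : ∀ θ, |t θ| ≤ 1) (θ₁ θ₂ : ℝ) :
    |t θ₁ - t θ₂| ≤ 7 * d * |θ₁ - θ₂| := by
  obtain ⟨c, hc0, hct⟩ := ht
  set P : ℂ → ℂ := fun z => ∑ n ∈ Finset.Icc (-(d:ℤ)) (d:ℤ), c n * z ^ (n + d).toNat with hP
  set Q : ℂ → ℂ := fun z => ∑ n ∈ Finset.Icc (-(d:ℤ)) (d:ℤ), c n * z ^ (d - n).toNat with hQ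
  have hPdiff : Differentiable ℂ P := by
    apply Differentiable.fun_sum
    intro n _
    exact (differentiable_pow _).const_mul _
  have hQdiff : Differentiable ℂ Q := by
    apply Differentiable.fun_sum
    intro n _
    exact (differentiable_pow _).const_mul _
  have hPc : ∀ θ : ℝ, P (Complex.exp (θ * I)) = Complex.exp ((d:ℂ) * θ * I) * (t θ : ℂ) := by
    intro θ
    rw [hct θ, Finset.mul_sum, hP]
    refine Finset.sum_congr rfl fun n hn => ?_
    rw [Finset.mem_Icc] at hn
    have h1 : (((n + (d:ℤ)).toNat : ℕ) : ℂ) = (n : ℂ) + d := by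
      have h2 := Int.toNat_of_nonneg (show (0:ℤ) ≤ n + d by omega)
      have h3 : (((n + (d:ℤ)).toNat : ℤ) : ℂ) = ((n + (d:ℤ) : ℤ) : ℂ) := by exact_mod_cast congrArg (fun k : ℤ => (k : ℂ)) h2
      push_cast at h3 ⊢
      exact h3
    rw [← Complex.exp_nat_mul, h1]
    rw [show ((n:ℂ) + d) * ((θ:ℂ) * I) = (n:ℂ) * θ * I + (d:ℂ) * θ * I by ring, Complex.exp_add]
    ring
  have hQc : ∀ θ : ℝ, Q (Complex.exp (θ * I)) = Complex.exp ((d:ℂ) * θ * I) * (t (-θ) : ℂ) := by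
    intro θ
    rw [hct (-θ), Finset.mul_sum, hQ]
    refine Finset.sum_congr rfl fun n hn => ?_
    rw [Finset.mem_Icc] at hn
    have h1 : ((((d:ℤ) - n).toNat : ℕ) : ℂ) = (d : ℂ) - n := by
      have h2 := Int.toNat_of_nonneg (show (0:ℤ) ≤ (d:ℤ) - n by omega)
      have h3 : ((((d:ℤ) - n).toNat : ℤ) : ℂ) = (((d:ℤ) - n : ℤ) : ℂ) := by exact_mod_cast congrArg (fun k : ℤ => (k : ℂ)) h2
      push_cast at h3 ⊢
      exact h3
    rw [← Complex.exp_nat_mul, h1]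
    rw [show ((d:ℂ) - n) * ((θ:ℂ) * I) = (n:ℂ) * (-θ:ℝ) * I + (d:ℂ) * θ * I by push_cast; ring,
      Complex.exp_add]
    ring
  have hmax : ∀ f : ℂ → ℂ, Differentiable ℂ f → (∀ θ : ℝ, ‖f (Complex.exp (θ * I))‖ ≤ 1) →
      ∀ z : ℂ, ‖z‖ ≤ 1 → ‖f z‖ ≤ 1 := by
    intro f hf hcirc z hz
    apply Complex.norm_le_of_forall_mem_frontier_norm_le (U := ball (0:ℂ) 1) isBounded_ball
      hf.diffContOnCl
    · intro w hw
      rw [frontier_ball (0:ℂ) one_ne_zero, mem_sphere_zero_iff_norm] at hw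
      have hw1 : ‖w‖ = 1 := hw
      have : w = Complex.exp ((Complex.arg w : ℂ) * I) := by
        conv_lhs => rw [← Complex.norm_mul_exp_arg_mul_I w]
        rw [hw1]; simp
      rw [this]
      exact hcirc _
    · rw [closure_ball (0:ℂ) one_ne_zero, mem_closedBall_zero_iff]
      exact hz
  have hPcirc : ∀ θ : ℝ, ‖P (Complex.exp (θ * I))‖ ≤ 1 := by
    intro θ
    rw [hPc θ]
    rw [norm_mul, show (d:ℂ) * θ * I = ((d * θ : ℝ) : ℂ) * I by push_cast; ring]
    simp only [Complex.norm_exp_ofReal_mul_I, one_mul, Complex.norm_real, Real.norm_eq_abs]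
    exact hb θ
  have hQcirc : ∀ θ : ℝ, ‖Q (Complex.exp (θ * I))‖ ≤ 1 := by
    intro θ
    rw [hQc θ]
    rw [norm_mul, show (d:ℂ) * θ * I = ((d * θ : ℝ) : ℂ) * I by push_cast; ring]
    simp only [Complex.norm_exp_ofReal_mul_I, one_mul, Complex.norm_real, Real.norm_eq_abs]
    exact hb (-θ)
  have hPQ : ∀ z : ℂ, z ≠ 0 → P z = z ^ (2*d) * Q z⁻¹ := by
    intro z hz
    rw [hP, hQ, Finset.mul_sum]
    refine Finset.sum_congr rfl fun n hn => ?_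
    rw [Finset.mem_Icc] at hn
    have hk : (d - n).toNat + (n + d).toNat = 2*d := by omega
    rw [inv_pow, ← hk, pow_add]
    have hzk : z ^ (d - n).toNat ≠ 0 := pow_ne_zero _ hz
    field_simp
  have hgrow : ∀ z : ℂ, 1 ≤ ‖z‖ → ‖P z‖ ≤ ‖z‖ ^ (2*d) := by
    intro z hz
    have hz0 : z ≠ 0 := by
      intro h; rw [h] at hz; simp at hz; linarith
    rw [hPQ z hz0, norm_mul, norm_pow]
    have : ‖Q z⁻¹‖ ≤ 1 := by
      apply hmax Q hQdiff hQcirc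
      rw [norm_inv]
      exact inv_le_one_of_one_le₀ hz
    calc ‖z‖ ^ (2*d) * ‖Q z⁻¹‖ ≤ ‖z‖ ^ (2*d) * 1 := by
          exact mul_le_mul_of_nonneg_left this (by positivity)
      _ = ‖z‖ ^ (2*d) := mul_one _
  have hderiv : ∀ z : ℂ, ‖z‖ ≤ 1 → ‖deriv P z‖ ≤ 6 * d := by
    intro z hz
    have hdpos : (0:ℝ) < d := by exact_mod_cast hd
    set R : ℝ := 1 / (2 * d) with hRdef
    have hR : 0 < R := by positivity
    have key := Complex.norm_deriv_le_of_forall_mem_sphere_norm_le (c := z) (R := R) (C := 3)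
      hR hPdiff.diffContOnCl ?_
    · calc ‖deriv P z‖ ≤ 3 / R := key
        _ = 6 * d := by rw [hRdef]; field_simp; ring
    · intro w hw
      rw [mem_sphere_iff_norm] at hw
      have hwle : ‖w‖ ≤ 1 + R := by
        calc ‖w‖ = ‖w - z + z‖ := by ring_nf
          _ ≤ ‖w - z‖ + ‖z‖ := norm_add_le _ _
          _ ≤ R + 1 := by rw [hw]; linarith
          _ = 1 + R := by ring
      rcases le_or_gt ‖w‖ 1 with h1 | h1
      · linarith [hmax P hPdiff hPcirc w h1]
      · calc ‖P w‖ ≤ ‖w‖ ^ (2*d) := hgrow w h1.le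
          _ ≤ (1 + R) ^ (2*d) := pow_le_pow_left₀ (norm_nonneg _) hwle _
          _ ≤ Real.exp R ^ (2*d) := pow_le_pow_left₀ (by positivity)
              (by linarith [Real.add_one_le_exp R]) _
          _ = Real.exp (((2*d : ℕ) : ℝ) * R) := (Real.exp_nat_mul R (2*d)).symm
          _ = Real.exp 1 := by
              congr 1
              rw [hRdef]
              push_cast
              field_simp
          _ ≤ 3 := by linarith [Real.exp_one_lt_d9.le, (by norm_num : (2.7182818286:ℝ) ≤ 3)]
  have hlip : ∀ z w : ℂ, ‖z‖ ≤ 1 → ‖w‖ ≤ 1 → ‖P z - P w‖ ≤ 6 * d * ‖z - w‖ := by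
    intro z w hz hw
    exact (convex_closedBall (0:ℂ) 1).norm_image_sub_le_of_norm_deriv_le
      (fun x _ => hPdiff x) (fun x hx => hderiv x (mem_closedBall_zero_iff.mp hx))
      (mem_closedBall_zero_iff.mpr hw) (mem_closedBall_zero_iff.mpr hz)
  -- final assembly
  have e1 := hPc θ₁
  have e2 := hPc θ₂
  have habs : ∀ r : ℝ, ‖Complex.exp ((d:ℂ) * r * I)‖ = 1 := by
    intro r
    rw [show (d:ℂ) * r * I = ((d * r : ℝ) : ℂ) * I by push_cast; ring]
    exact Complex.norm_exp_ofReal_mul_I _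
  have key : Complex.exp ((d:ℂ) * θ₁ * I) * ((t θ₁ : ℂ) - (t θ₂ : ℂ)) =
      (P (Complex.exp (θ₁ * I)) - P (Complex.exp (θ₂ * I)))
      - (Complex.exp ((d:ℂ) * θ₁ * I) - Complex.exp ((d:ℂ) * θ₂ * I)) * (t θ₂ : ℂ) := by
    rw [e1, e2]; ring
  have lhs_norm : ‖Complex.exp ((d:ℂ) * θ₁ * I) * ((t θ₁ : ℂ) - (t θ₂ : ℂ))‖ = |t θ₁ - t θ₂| := by
    rw [norm_mul]
    simp only [habs θ₁, one_mul]
    rw [← Complex.ofReal_sub, Complex.norm_real, Real.norm_eq_abs]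
  have hee : ‖Complex.exp ((θ₁:ℂ) * I) - Complex.exp ((θ₂:ℂ) * I)‖ ≤ |θ₁ - θ₂| := by
    have := exp_I_lip 1 θ₁ θ₂
    simpa using this
  have hee2 : ‖Complex.exp ((d:ℂ) * θ₁ * I) - Complex.exp ((d:ℂ) * θ₂ * I)‖ ≤ d * |θ₁ - θ₂| := by
    have h := exp_I_lip d θ₁ θ₂
    rw [Nat.abs_cast] at h
    convert h using 3 <;> push_cast <;> ring
  have htb : ‖(t θ₂ : ℂ)‖ ≤ 1 := by
    rw [Complex.norm_real, Real.norm_eq_abs]; exact hb θ₂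
  calc |t θ₁ - t θ₂| = ‖Complex.exp ((d:ℂ) * θ₁ * I) * ((t θ₁ : ℂ) - (t θ₂ : ℂ))‖ := lhs_norm.symm
    _ = ‖(P (Complex.exp (θ₁ * I)) - P (Complex.exp (θ₂ * I)))
        - (Complex.exp ((d:ℂ) * θ₁ * I) - Complex.exp ((d:ℂ) * θ₂ * I)) * (t θ₂ : ℂ)‖ := by
        rw [key]
    _ ≤ ‖P (Complex.exp (θ₁ * I)) - P (Complex.exp (θ₂ * I))‖
        + ‖Complex.exp ((d:ℂ) * θ₁ * I) - Complex.exp ((d:ℂ) * θ₂ * I)‖ * ‖(t θ₂ : ℂ)‖ := by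
        refine (norm_sub_le _ _).trans ?_
        rw [norm_mul]
    _ ≤ 6 * d * ‖Complex.exp ((θ₁:ℂ) * I) - Complex.exp ((θ₂:ℂ) * I)‖ + d * |θ₁ - θ₂| * 1 := by
        apply add_le_add
        · exact hlip _ _ (by rw [Complex.norm_exp_ofReal_mul_I])
            (by rw [Complex.norm_exp_ofReal_mul_I])
        · exact mul_le_mul hee2 htb (norm_nonneg _) (by positivity)
    _ ≤ 6 * d * |θ₁ - θ₂| + d * |θ₁ - θ₂| * 1 := by
        gcongr
    _ = 7 * d * |θ₁ - θ₂| := by ring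

end Bernstein

section Main

open Real


lemma sin_helper {u s : ℝ} (hu : 0 ≤ u) (h1 : u ≤ s) (h2 : u ≤ π - s) :
    Real.sin u ≤ Real.sin s := by
  rcases le_or_gt s (π/2) with h | h
  · exact Real.strictMonoOn_sin.monotoneOn
      ⟨by linarith [Real.pi_pos], by linarith⟩ ⟨by linarith [Real.pi_pos], h⟩ h1
  · rw [← Real.sin_pi_sub s]
    exact Real.strictMonoOn_sin.monotoneOn
      ⟨by linarith [Real.pi_pos], by linarith⟩ ⟨by linarith [Real.pi_pos], by linarith⟩ h2

lemma sin_min_le {a b X : ℝ} (ha : 0 ≤ a) (ha' : a ≤ π/2) (hb : 0 ≤ b) (hb' : b ≤ π/2)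
    (h1 : X ≤ Real.sin (2*a)) (h2 : X ≤ Real.sin (2*b)) : X ≤ Real.sin (a + b) := by
  wlog hab : a ≤ b generalizing a b
  · rw [add_comm]; exact this hb hb' ha ha' h2 h1 (by linarith)
  rcases le_or_gt (a + b) (π/2) with h | h
  · refine h1.trans (sin_helper (by linarith) (by linarith) (by linarith))
  · refine h2.trans ?_
    rw [← Real.sin_pi_sub (2*b)]
    exact sin_helper (by linarith) (by linarith) (by linarith)

-- Jordan multiplied form
lemma jordan_mul {u : ℝ} (hu : 0 ≤ u) (hu' : u ≤ π/2) : 2 * u ≤ π * Real.sin u := by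
  have h := Real.mul_le_sin hu hu'
  rw [div_mul_eq_mul_div, div_le_iff₀ Real.pi_pos] at h
  linarith

lemma jordan_abs {u : ℝ} (hu : |u| ≤ π/2) : 2 * |u| ≤ π * |Real.sin u| := by
  have h1 : Real.sin |u| = |Real.sin u| := by
    rcases le_or_gt 0 u with h | h
    · rw [abs_of_nonneg h, abs_of_nonneg (Real.sin_nonneg_of_nonneg_of_le_pi h
        (by rw [abs_of_nonneg h] at hu; linarith [Real.pi_pos]))]
    · have h2 : Real.sin u ≤ 0 := by
        refine Real.sin_nonpos_of_nonpos_of_neg_pi_le h.le ?_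
        rw [abs_of_neg h] at hu
        linarith [Real.pi_pos]
      rw [abs_of_neg h, Real.sin_neg, abs_of_nonpos h2]
  rw [← h1]
  exact jordan_mul (abs_nonneg u) hu

set_option maxHeartbeats 1000000 in
theorem trig_poly_arcsin_sqrt_degree_bound :
    ∃ c : ℝ, 0 < c ∧
      ∀ (d : ℕ), 1 ≤ d → ∀ t : ℝ → ℝ, IsTrigPolyDeg d t →
        (∀ θ : ℝ, t θ ∈ Set.Icc (0:ℝ) 1) →
        ∀ x Δ : ℝ, x ∈ Set.Icc (0:ℝ) 1 → Δ ≠ 0 → x + Δ ∈ Set.Icc (0:ℝ) 1 →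
          3/4 ≤ t (Real.arcsin (Real.sqrt x)) →
          t (Real.arcsin (Real.sqrt (x + Δ))) ≤ 1/4 →
          ∀ m : ℝ, (m = x ∨ m = x + Δ) →
            |x - 1/2| ≤ |m - 1/2| → |x + Δ - 1/2| ≤ |m - 1/2| →
            c * (Real.sqrt (1 / |Δ|) + Real.sqrt (m * (1 - m)) / |Δ|) ≤ (d : ℝ) := by
  refine ⟨1/44, by norm_num, ?_⟩
  intro d hd t ht htr x Δ hx hΔ hxΔ h34 h14 m hm hmx hmxΔ
  obtain ⟨hx0, hx1⟩ := hx
  obtain ⟨hy0, hy1⟩ := hxΔ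
  set α := Real.arcsin (Real.sqrt x) with hαdef
  set β := Real.arcsin (Real.sqrt (x+Δ)) with hβdef
  have hsx1 : Real.sqrt x ≤ 1 := Real.sqrt_le_one.mpr hx1
  have hsy1 : Real.sqrt (x+Δ) ≤ 1 := Real.sqrt_le_one.mpr hy1
  have hsinα : Real.sin α = Real.sqrt x :=
    Real.sin_arcsin (by linarith [Real.sqrt_nonneg x]) hsx1
  have hsinβ : Real.sin β = Real.sqrt (x+Δ) :=
    Real.sin_arcsin (by linarith [Real.sqrt_nonneg (x+Δ)]) hsy1
  have hα0 : 0 ≤ α := Real.arcsin_nonneg.mpr (Real.sqrt_nonneg x)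
  have hβ0 : 0 ≤ β := Real.arcsin_nonneg.mpr (Real.sqrt_nonneg _)
  have hα2 : α ≤ π/2 := Real.arcsin_le_pi_div_two _
  have hβ2 : β ≤ π/2 := Real.arcsin_le_pi_div_two _
  have hsα2 : Real.sin α ^ 2 = x := by rw [hsinα, Real.sq_sqrt hx0]
  have hsβ2 : Real.sin β ^ 2 = x + Δ := by rw [hsinβ, Real.sq_sqrt hy0]
  have hid : Real.sin (α+β) * Real.sin (β-α) = Δ := by
    have pyα := Real.sin_sq_add_cos_sq α
    have pyβ := Real.sin_sq_add_cos_sq β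
    have e : Real.sin (α+β) * Real.sin (β-α) = Real.sin β ^ 2 - Real.sin α ^ 2 := by
      rw [Real.sin_add, Real.sin_sub]
      linear_combination Real.sin β ^ 2 * pyα - Real.sin α ^ 2 * pyβ
    rw [e, hsα2, hsβ2]; ring
  set D := |β - α| with hDdef
  have hDle : |β - α| ≤ π/2 := by
    rw [abs_sub_le_iff]
    constructor <;> linarith
  have hsum0 : 0 ≤ α + β := by linarith
  have hsumπ : α + β ≤ π := by linarith [Real.pi_pos]
  have hsinsum0 : 0 ≤ Real.sin (α+β) := Real.sin_nonneg_of_nonneg_of_le_pi hsum0 hsumπ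
  have hΔabs : |Δ| = Real.sin (α+β) * |Real.sin (β-α)| := by
    rw [← hid, abs_mul, abs_of_nonneg hsinsum0]
  have j1 : 2 * D ≤ π * |Real.sin (β - α)| := jordan_abs hDle
  have j2 : 2 * D ≤ π * Real.sin (α+β) := by
    have h1 : Real.sin D ≤ Real.sin (α+β) := by
      apply sin_helper (abs_nonneg _)
      · rw [abs_sub_le_iff]; constructor <;> linarith
      · rw [abs_sub_le_iff]; constructor <;> linarith
    have h2 := jordan_mul (abs_nonneg (β-α) : (0:ℝ) ≤ D) hDle
    calc 2*D ≤ π * Real.sin D := h2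
      _ ≤ π * Real.sin (α+β) := mul_le_mul_of_nonneg_left h1 Real.pi_pos.le
  have hcosα : Real.cos α = Real.sqrt (1 - x) := by
    rw [hαdef, Real.cos_arcsin]
    congr 1
    rw [Real.sq_sqrt hx0]
  have hcosβ : Real.cos β = Real.sqrt (1 - (x+Δ)) := by
    rw [hβdef, Real.cos_arcsin]
    congr 1
    rw [Real.sq_sqrt hy0]
  have key_le : ∀ y : ℝ, 0 ≤ y → y ≤ 1 → |y - 1/2| ≤ |m - 1/2| →
      Real.sqrt (m*(1-m)) ≤ Real.sqrt (y*(1-y)) := by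
    intro y hy0' hy1' hy
    apply Real.sqrt_le_sqrt
    have h2 : (y-1/2)^2 ≤ (m-1/2)^2 := by
      rw [← sq_abs (y-1/2), ← sq_abs (m-1/2)]
      exact pow_le_pow_left₀ (abs_nonneg _) hy 2
    linarith only [h2]
  have hsin2α : Real.sin (2*α) = 2 * Real.sqrt (x*(1-x)) := by
    rw [Real.sin_two_mul, hsinα, hcosα, mul_assoc, ← Real.sqrt_mul hx0]
  have hsin2β : Real.sin (2*β) = 2 * Real.sqrt ((x+Δ)*(1-(x+Δ))) := by
    rw [Real.sin_two_mul, hsinβ, hcosβ, mul_assoc, ← Real.sqrt_mul hy0]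
  have j3 : 2 * Real.sqrt (m*(1-m)) ≤ Real.sin (α+β) := by
    apply sin_min_le hα0 hα2 hβ0 hβ2
    · rw [hsin2α]; linarith [key_le x hx0 hx1 hmx]
    · rw [hsin2β]; linarith [key_le (x+Δ) hy0 hy1 hmxΔ]
  have hb : ∀ θ, |t θ| ≤ 1 := fun θ => abs_le.mpr ⟨by linarith [(htr θ).1], (htr θ).2⟩
  have hber := bernstein_lip hd ht hb α β
  have hgap : 1/2 ≤ |t α - t β| := by
    rw [abs_of_nonneg (by linarith)]
    linarith
  have h14d : 1 ≤ 14 * d * D := by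
    have he : |α - β| = D := by rw [hDdef, abs_sub_comm]
    rw [he] at hber
    linarith
  have hD0 : 0 < D := by
    rcases (abs_nonneg (β - α)).lt_or_eq with h | h
    · exact h
    · exfalso; rw [hDdef, ← h] at h14d; simp at h14d; linarith
  have hΔpos : 0 < |Δ| := abs_pos.mpr hΔ
  have hdpos : (0:ℝ) < d := Nat.cast_pos.mpr hd
  have hpi2 : π < 3.1415931 := by linarith [Real.pi_lt_d6]
  have hpisq : π^2 ≤ 9.87 := by
    have h := mul_le_mul hpi2.le hpi2.le Real.pi_pos.le (by norm_num : (0:ℝ) ≤ 3.1415931)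
    calc π^2 = π * π := sq π
      _ ≤ 3.1415931 * 3.1415931 := h
      _ ≤ 9.87 := by norm_num
  have h4D : 4 * D^2 ≤ π^2 * |Δ| := by
    rw [hΔabs]
    calc 4 * D^2 = (2*D) * (2*D) := by ring
      _ ≤ (π * Real.sin (α+β)) * (π * |Real.sin (β-α)|) :=
          mul_le_mul j2 j1 (by positivity) (by positivity)
      _ = π^2 * (Real.sin (α+β) * |Real.sin (β-α)|) := by ring
  have hA : Real.sqrt (1/|Δ|) ≤ 22 * d := by
    have h1 : (1:ℝ)/|Δ| ≤ (22*d)^2 := by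
      rw [div_le_iff₀ hΔpos]
      have e1 : (0:ℝ) ≤ (d:ℝ)^2 * |Δ| := by positivity
      have s3 : 1 ≤ 196 * ((d:ℝ)^2 * D^2) := by
        linarith only [h14d, sq_nonneg (14*(d:ℝ)*D - 1)]
      have s4 : (d:ℝ)^2 * (4 * D^2) ≤ (d:ℝ)^2 * (π^2 * |Δ|) :=
        mul_le_mul_of_nonneg_left h4D (sq_nonneg (d:ℝ))
      have s5 : π^2 * ((d:ℝ)^2 * |Δ|) ≤ 9.87 * ((d:ℝ)^2 * |Δ|) :=
        mul_le_mul_of_nonneg_right hpisq e1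
      linarith only [s3, s4, s5]
    calc Real.sqrt (1/|Δ|) ≤ Real.sqrt ((22*d)^2) := Real.sqrt_le_sqrt h1
      _ = 22*d := Real.sqrt_sq (by positivity)
  have hB : Real.sqrt (m*(1-m)) / |Δ| ≤ 11 * d := by
    rw [div_le_iff₀ hΔpos]
    have h4M : 4 * Real.sqrt (m*(1-m)) * D ≤ π * |Δ| := by
      rw [hΔabs]
      calc 4 * Real.sqrt (m*(1-m)) * D = (2*Real.sqrt (m*(1-m))) * (2*D) := by ring
        _ ≤ Real.sin (α+β) * (π * |Real.sin (β-α)|) :=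
            mul_le_mul j3 j1 (by positivity) hsinsum0
        _ = π * (Real.sin (α+β) * |Real.sin (β-α)|) := by ring
    have u1 : Real.sqrt (m*(1-m)) * 1 ≤ Real.sqrt (m*(1-m)) * (14*d*D) :=
      mul_le_mul_of_nonneg_left h14d (Real.sqrt_nonneg (m*(1-m)))
    have u2 : (4 * Real.sqrt (m*(1-m)) * D) * d ≤ (π * |Δ|) * d :=
      mul_le_mul_of_nonneg_right h4M hdpos.le
    have u3 : π * (|Δ| * d) ≤ 3.1415931 * (|Δ| * d) :=
      mul_le_mul_of_nonneg_right hpi2.le (mul_nonneg hΔpos.le hdpos.le)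
    linarith only [u1, u2, u3, mul_nonneg hΔpos.le hdpos.le]
  linarith [Real.sqrt_nonneg (1/|Δ|), Real.sqrt_nonneg (m*(1-m))]

end Main
end

section
/- Let n, m ≥ 1 be natural numbers, N = 2^n, and let b : [0,1] → [0,1] be any function (the phase encoding). Define β : [0,1) → {0, …, 2^m − 1} by β(x) = ⌊x · 2^m⌋ and β₋ : {0, …, 2^m − 1} → [0,1] by β₋(k) = k · 2^{−m} + 2^{−m−1}. Then there exist unitary matrices W_0, W_1, W_2 on ℂ^N ⊗ ℂ² ⊗ ℂ^N ⊗ ℂ^{2^m} (indexed by Fin N × Fin 2 × Fin N × Fin 2^m), not depending on f, such that for every f : Fin N → [0,1), every j ∈ Fin N and every v ∈ ℂ²: W_2 (I ⊗ I ⊗ B_f) W_1 (I ⊗ I ⊗ B_f) W_0 (e_j ⊗ v ⊗ e_0 ⊗ e_0) = (P^b_g (e_j ⊗ v)) ⊗ e_0 ⊗ e_0, where g = β₋ ∘ β ∘ f. That is, two bit queries together with f-independent unitaries exactly implement the phase query for the rounded function g (with the ancilla registers returned to |0⟩). -/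
open Kronecker

/-- The `m`-bit query for `f : Fin N → [0,1)` (with encoding `β(y) = ⌊y·2^m⌋`):
the permutation matrix on `ℂ^N ⊗ ℂ^{2^m}` sending `e_j ⊗ e_x` to
`e_j ⊗ e_{(x + ⌊f(j)·2^m⌋) mod 2^m}`. -/
noncomputable def bitQuery (N m : ℕ) (f : Fin N → ℝ) :
    Matrix (Fin N × Fin (2 ^ m)) (Fin N × Fin (2 ^ m)) ℂ :=
  Matrix.of fun p q =>
    if p.1 = q.1 ∧ (p.2 : ℕ) = ((q.2 : ℕ) + Nat.floor (f q.1 * 2 ^ m)) % 2 ^ m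
    then 1 else 0

/-- The phase query with encoding `b` for `h : Fin N → [0,1]`: the block-diagonal
matrix on `ℂ^N ⊗ ℂ²` whose `j`-th block is `R(arcsin √(b (h j)))`. -/
noncomputable def phaseQueryEnc (N : ℕ) (b : ℝ → ℝ) (h : Fin N → ℝ) :
    Matrix (Fin N × Fin 2) (Fin N × Fin 2) ℂ :=
  Matrix.of fun p q =>
    if p.1 = q.1 then RotC (Real.arcsin (Real.sqrt (b (h q.1)))) p.2 q.2 else 0


section PermMat
variable {ι : Type*} [Fintype ι] [DecidableEq ι]

noncomputable def permMat (σ : Equiv.Perm ι) : Matrix ι ι ℂ :=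
  Matrix.of fun p q => if p = σ q then 1 else 0

lemma permMat_mulVec (σ : Equiv.Perm ι) (v : ι → ℂ) :
    (permMat σ).mulVec v = fun p => v (σ.symm p) := by
  funext p
  simp only [permMat, Matrix.mulVec, dotProduct, Matrix.of_apply, ite_mul, one_mul,
    zero_mul]
  rw [Finset.sum_eq_single (σ.symm p)]
  · simp
  · intro q _ hq
    rw [if_neg]
    intro h; exact hq (by simp [h])
  · simp

lemma permMat_mul (σ τ : Equiv.Perm ι) : permMat σ * permMat τ = permMat (σ * τ) := by
  ext p r
  simp only [permMat, Matrix.mul_apply, Matrix.of_apply, ite_mul, one_mul, zero_mul]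
  rw [Finset.sum_eq_single (τ r)]
  · simp [Equiv.Perm.mul_apply]
    split_ifs <;> simp_all [Equiv.Perm.mul_apply]
  · intro q _ hq
    simp [hq]
  · simp

lemma permMat_one : permMat (1 : Equiv.Perm ι) = 1 := by
  ext p q
  simp [permMat, Matrix.one_apply]
  split_ifs <;> simp_all

lemma star_permMat (σ : Equiv.Perm ι) : star (permMat σ) = permMat σ⁻¹ := by
  ext p q
  simp only [Matrix.star_apply, permMat, Matrix.of_apply]
  by_cases h : q = σ p
  · rw [if_pos h, if_pos (by simp [h])]
    simp
  · rw [if_neg h, if_neg (by intro h'; exact h (by simp [h']))]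
    simp

lemma permMat_unitary (σ : Equiv.Perm ι) : permMat σ ∈ Matrix.unitaryGroup ι ℂ := by
  rw [Matrix.mem_unitaryGroup_iff, star_permMat, permMat_mul, mul_inv_cancel, permMat_one]

end PermMat

lemma RotC_mul_star (θ : ℝ) : RotC θ * star (RotC θ) = 1 := by
  have h : star (RotC θ)
      = !![(Real.cos θ : ℂ), (Real.sin θ : ℂ); (-(Real.sin θ) : ℂ), (Real.cos θ : ℂ)] := by
    ext i j
    fin_cases i <;> fin_cases j <;>
      simp [RotC, Matrix.star_apply, ← Complex.ofReal_sin, ← Complex.ofReal_cos, Complex.conj_ofReal]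
  rw [h]
  ext i j
  fin_cases i <;> fin_cases j <;>
    simp [RotC, Matrix.mul_apply, Fin.sum_univ_succ, Matrix.one_apply] <;>
    norm_cast <;> nlinarith [Real.sin_sq_add_cos_sq θ]

section CtrlRot
variable {A K M : Type*} [Fintype A] [Fintype K] [Fintype M]
  [DecidableEq A] [DecidableEq K] [DecidableEq M]

noncomputable def ctrlRot (θ : M → ℝ) : Matrix (A × Fin 2 × K × M) (A × Fin 2 × K × M) ℂ :=
  Matrix.of fun p q =>
    if p.1 = q.1 ∧ p.2.2.1 = q.2.2.1 ∧ p.2.2.2 = q.2.2.2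
    then RotC (θ q.2.2.2) p.2.1 q.2.1 else 0

def ctrlEquiv : (A × Fin 2 × K × M) ≃ (Fin 2 × (A × K × M)) where
  toFun p := (p.2.1, (p.1, p.2.2.1, p.2.2.2))
  invFun p := (p.2.1, p.1, p.2.2.1, p.2.2.2)
  left_inv p := rfl
  right_inv p := rfl

lemma ctrlRot_eq (θ : M → ℝ) :
    (ctrlRot θ : Matrix (A × Fin 2 × K × M) _ ℂ)
      = (Matrix.blockDiagonal fun t : A × K × M => RotC (θ t.2.2)).submatrix
          ctrlEquiv ctrlEquiv := by
  ext ⟨a, s, k, x⟩ ⟨a', s', k', x'⟩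
  simp only [ctrlRot, ctrlEquiv, Matrix.of_apply, Matrix.submatrix_apply, Equiv.coe_fn_mk,
    Matrix.blockDiagonal_apply, Prod.ext_iff]
  split_ifs with h1
  · rw [h1.2.2]
  · rfl

lemma ctrlRot_unitary (θ : M → ℝ) :
    (ctrlRot θ : Matrix (A × Fin 2 × K × M) _ ℂ) ∈ Matrix.unitaryGroup (A × Fin 2 × K × M) ℂ := by
  rw [Matrix.mem_unitaryGroup_iff, ctrlRot_eq]
  rw [Matrix.star_eq_conjTranspose, Matrix.conjTranspose_submatrix,
    Matrix.blockDiagonal_conjTranspose]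
  rw [Matrix.submatrix_mul_equiv, ← Matrix.blockDiagonal_mul]
  have : (fun k : A × K × M => RotC (θ k.2.2) * Matrix.conjTranspose (RotC (θ k.2.2))) = 1 := by
    funext t
    exact RotC_mul_star (θ t.2.2)
  rw [this, Matrix.blockDiagonal_one, Matrix.submatrix_one_equiv]

lemma ctrlRot_mulVec (θ : M → ℝ) (w : (A × Fin 2 × K × M) → ℂ) :
    (ctrlRot θ).mulVec w = fun p =>
      ∑ s' : Fin 2, RotC (θ p.2.2.2) p.2.1 s' * w (p.1, s', p.2.2.1, p.2.2.2) := by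
  funext ⟨a, s, k, x⟩
  simp [ctrlRot, Matrix.mulVec, dotProduct, Fintype.sum_prod_type, ite_and, ite_mul,
    zero_mul, Finset.sum_ite_eq, Finset.sum_ite_eq']

end CtrlRot

def copyPerm (n m : ℕ) : Equiv.Perm (Fin (2^n) × Fin 2 × Fin (2^n) × Fin (2^m)) where
  toFun p := (p.1, p.2.1, p.2.2.1 + p.1, p.2.2.2)
  invFun p := (p.1, p.2.1, p.2.2.1 - p.1, p.2.2.2)
  left_inv := by intro ⟨a, s, k, x⟩; simp
  right_inv := by intro ⟨a, s, k, x⟩; simp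

def negPerm (n m : ℕ) : Equiv.Perm (Fin (2^n) × Fin 2 × Fin (2^n) × Fin (2^m)) where
  toFun p := (p.1, p.2.1, p.2.2.1, -p.2.2.2)
  invFun p := (p.1, p.2.1, p.2.2.1, -p.2.2.2)
  left_inv := by intro ⟨a, s, k, x⟩; simp
  right_inv := by intro ⟨a, s, k, x⟩; simp

def shiftPerm (n m : ℕ) (c : Fin (2^n) → Fin (2^m)) :
    Equiv.Perm (Fin (2^n) × Fin 2 × Fin (2^n) × Fin (2^m)) where
  toFun p := (p.1, p.2.1, p.2.2.1, p.2.2.2 + c p.2.2.1)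
  invFun p := (p.1, p.2.1, p.2.2.1, p.2.2.2 - c p.2.2.1)
  left_inv := by intro ⟨a, s, k, x⟩; simp
  right_inv := by intro ⟨a, s, k, x⟩; simp


theorem two_bit_queries_simulate_phase_query
    (n m : ℕ) (hn : 1 ≤ n) (hm : 1 ≤ m) (b : ℝ → ℝ)
    (hb : ∀ x ∈ Set.Icc (0:ℝ) 1, b x ∈ Set.Icc (0:ℝ) 1) :
    ∃ W₀ W₁ W₂ :
        Matrix (Fin (2 ^ n) × Fin 2 × Fin (2 ^ n) × Fin (2 ^ m))
          (Fin (2 ^ n) × Fin 2 × Fin (2 ^ n) × Fin (2 ^ m)) ℂ,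
      W₀ ∈ Matrix.unitaryGroup (Fin (2 ^ n) × Fin 2 × Fin (2 ^ n) × Fin (2 ^ m)) ℂ ∧
      W₁ ∈ Matrix.unitaryGroup (Fin (2 ^ n) × Fin 2 × Fin (2 ^ n) × Fin (2 ^ m)) ℂ ∧
      W₂ ∈ Matrix.unitaryGroup (Fin (2 ^ n) × Fin 2 × Fin (2 ^ n) × Fin (2 ^ m)) ℂ ∧
      ∀ f : Fin (2 ^ n) → ℝ, (∀ j, f j ∈ Set.Ico (0:ℝ) 1) →
        ∀ (j : Fin (2 ^ n)) (v : Fin 2 → ℂ),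
          (W₂.mulVec
            (((1 : Matrix (Fin (2 ^ n)) (Fin (2 ^ n)) ℂ) ⊗ₖ
                ((1 : Matrix (Fin 2) (Fin 2) ℂ) ⊗ₖ bitQuery (2 ^ n) m f)).mulVec
              (W₁.mulVec
                (((1 : Matrix (Fin (2 ^ n)) (Fin (2 ^ n)) ℂ) ⊗ₖ
                    ((1 : Matrix (Fin 2) (Fin 2) ℂ) ⊗ₖ bitQuery (2 ^ n) m f)).mulVec
                  (W₀.mulVec
                    (fun p => if p.1 = j ∧ p.2.2.1 = 0 ∧ p.2.2.2 = 0
                      then v p.2.1 else 0))))))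
          = fun p => if p.2.2.1 = 0 ∧ p.2.2.2 = 0
              then (phaseQueryEnc (2 ^ n) b
                  (fun i => (Nat.floor (f i * 2 ^ m) : ℝ) * 2 ^ (-(m : ℝ))
                    + 2 ^ (-(m : ℝ) - 1))).mulVec
                (fun q => if q.1 = j then v q.2 else 0) (p.1, p.2.1)
              else 0 := by
  have hM : (0:ℕ) < 2^m := by positivity
  refine ⟨permMat (copyPerm n m),
    permMat (negPerm n m) * ctrlRot (fun x : Fin (2^m) =>
      Real.arcsin (Real.sqrt (b ((x.1 : ℝ) * 2 ^ (-(m:ℝ)) + 2 ^ (-(m:ℝ) - 1))))),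
    permMat ((copyPerm n m)⁻¹), permMat_unitary _,
    mul_mem (permMat_unitary _) (ctrlRot_unitary _), permMat_unitary _, ?_⟩
  intro f hf j v
  set c : Fin (2^n) → Fin (2^m) := fun i => ⟨⌊f i * 2^m⌋₊ % 2^m, Nat.mod_lt _ hM⟩ with hc
  have hcv : ∀ i, ((c i : Fin (2^m)) : ℕ) = ⌊f i * 2^m⌋₊ := by
    intro i
    have h0 := (hf i).1
    have h1 := (hf i).2
    apply Nat.mod_eq_of_lt
    rw [Nat.floor_lt (by positivity)]
    push_cast
    nlinarith [pow_pos (show (0:ℝ) < 2 by norm_num) m]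
  have hB : ((1 : Matrix (Fin (2^n)) (Fin (2^n)) ℂ) ⊗ₖ
      ((1 : Matrix (Fin 2) (Fin 2) ℂ) ⊗ₖ bitQuery (2^n) m f)) = permMat (shiftPerm n m c) := by
    ext ⟨a, s, k, x⟩ ⟨a', s', k', x'⟩
    have hx : (x = x' + c k') ↔ (x : ℕ) = ((x' : ℕ) + ⌊f k' * 2^m⌋₊) % 2^m := by
      rw [Fin.ext_iff, Fin.val_add]
      show _ = (_ + ⌊f k' * 2^m⌋₊ % 2^m) % 2^m ↔ _
      rw [Nat.add_mod_mod]
    simp only [Matrix.kroneckerMap_apply, Matrix.one_apply, bitQuery, permMat, shiftPerm,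
      Matrix.of_apply, Equiv.coe_fn_mk, Prod.ext_iff, hx, ite_and, mul_ite, mul_one, mul_zero,
      ite_mul, one_mul, zero_mul]
    split_ifs <;> rfl
  rw [hB, ← Matrix.mulVec_mulVec]
  simp only [permMat_mulVec, ctrlRot_mulVec]
  funext ⟨i, s, k, x⟩
  simp only [copyPerm, negPerm, shiftPerm, Equiv.Perm.inv_def, Equiv.symm_symm,
    Equiv.coe_fn_symm_mk, Equiv.coe_fn_mk, phaseQueryEnc, Matrix.mulVec, dotProduct,
    Matrix.of_apply, Fintype.sum_prod_type, ite_mul, zero_mul, Finset.sum_ite_eq,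
    Finset.mem_univ, if_true]
  by_cases hij : i = j <;> by_cases hk : k = 0 <;> by_cases hx : x = 0 <;>
    simp [hij, hk, hx, hcv, Finset.sum_ite_eq, add_sub_cancel_right, neg_sub,
      sub_sub_cancel_left, sub_self, neg_eq_zero, zero_sub, neg_neg, zero_add, sub_zero]
end

section
/- Let m ≥ 1 and N ≥ 1 be natural numbers, let β(x) = ⌊x · 2^m⌋ and g(x) = β(x) · 2^{−m} + 2^{−m−1}. For f : Fin N → [0,1) let Q_f denote the block-diagonal matrix on ℂ^N ⊗ ℂ² (indexed by Fin N × Fin 2) whose j-th 2×2 block is R(arcsin √(f(j))). Then for every f : Fin N → [0,1), the operator norm satisfies ‖Q_f − Q_{g ∘ f}‖ ≤ 2^{−m/2}. -/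
/-- The phase query (with encoding `β^phase = id`) for `f : Fin N → [0,1]`: the
block-diagonal matrix on `ℂ^N ⊗ ℂ²` whose `j`-th block is `R(arcsin √(f j))`. -/
noncomputable def phaseQuery (N : ℕ) (f : Fin N → ℝ) :
    Matrix (Fin N × Fin 2) (Fin N × Fin 2) ℂ :=
  Matrix.of fun p q =>
    if p.1 = q.1 then RotC (Real.arcsin (Real.sqrt (f q.1))) p.2 q.2 else 0

lemma sqrt_sub_sq_le (a b : ℝ) (ha : 0 ≤ a) (hb : 0 ≤ b) :
    (Real.sqrt a - Real.sqrt b) ^ 2 ≤ |a - b| := by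
  rcases le_total b a with h | h
  · rw [abs_of_nonneg (by linarith)]
    have hs := Real.sqrt_le_sqrt h
    nlinarith [Real.sq_sqrt ha, Real.sq_sqrt hb, Real.sqrt_nonneg b,
      mul_le_mul_of_nonneg_right hs (Real.sqrt_nonneg b)]
  · rw [abs_of_nonpos (by linarith)]
    have hs := Real.sqrt_le_sqrt h
    nlinarith [Real.sq_sqrt ha, Real.sq_sqrt hb, Real.sqrt_nonneg a,
      mul_le_mul_of_nonneg_right hs (Real.sqrt_nonneg a)]

lemma key_bound (x y : ℝ) (hx0 : 0 ≤ x) (hx1 : x ≤ 1) (hy0 : 0 ≤ y) (hy1 : y ≤ 1) :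
    (Real.cos (Real.arcsin (Real.sqrt x)) - Real.cos (Real.arcsin (Real.sqrt y))) ^ 2
      + (Real.sin (Real.arcsin (Real.sqrt x)) - Real.sin (Real.arcsin (Real.sqrt y))) ^ 2
      ≤ 2 * |x - y| := by
  have hsx : Real.sin (Real.arcsin (Real.sqrt x)) = Real.sqrt x :=
    Real.sin_arcsin (le_trans (by norm_num) (Real.sqrt_nonneg x)) (by
      rw [show (1:ℝ) = Real.sqrt 1 by simp]; exact Real.sqrt_le_sqrt hx1)
  have hsy : Real.sin (Real.arcsin (Real.sqrt y)) = Real.sqrt y :=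
    Real.sin_arcsin (le_trans (by norm_num) (Real.sqrt_nonneg y)) (by
      rw [show (1:ℝ) = Real.sqrt 1 by simp]; exact Real.sqrt_le_sqrt hy1)
  have hcx : Real.cos (Real.arcsin (Real.sqrt x)) = Real.sqrt (1 - x) := by
    rw [Real.cos_arcsin, Real.sq_sqrt hx0]
  have hcy : Real.cos (Real.arcsin (Real.sqrt y)) = Real.sqrt (1 - y) := by
    rw [Real.cos_arcsin, Real.sq_sqrt hy0]
  rw [hsx, hsy, hcx, hcy]
  have h1 := sqrt_sub_sq_le (1 - x) (1 - y) (by linarith) (by linarith)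
  have h2 := sqrt_sub_sq_le x y hx0 hy0
  have h3 : |1 - x - (1 - y)| = |x - y| := by
    rw [show (1:ℝ) - x - (1-y) = -(x-y) by ring, abs_neg]
  linarith [h1, h2, h3.le, h3.ge]

lemma conformal (c s : ℝ) (u v : ℂ) :
    ‖(c:ℂ) * u + (-s : ℂ) * v‖ ^ 2 + ‖(s:ℂ) * u + (c:ℂ) * v‖ ^ 2
      = (c ^ 2 + s ^ 2) * (‖u‖ ^ 2 + ‖v‖ ^ 2) := by
  simp only [← Complex.normSq_eq_norm_sq]
  simp only [Complex.normSq_apply, Complex.add_re, Complex.add_im, Complex.mul_re,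
    Complex.mul_im, Complex.ofReal_re, Complex.ofReal_im, Complex.neg_re, Complex.neg_im]
  ring

theorem phase_query_rounding_error (m N : ℕ) (hm : 1 ≤ m) (hN : 1 ≤ N)
    (f : Fin N → ℝ) (hf : ∀ j, f j ∈ Set.Ico (0:ℝ) 1) :
    ‖Matrix.toEuclideanCLM (𝕜 := ℂ)
        (phaseQuery N f
          - phaseQuery N (fun j =>
              (Nat.floor (f j * 2 ^ m) : ℝ) * 2 ^ (-(m : ℝ)) + 2 ^ (-(m : ℝ) - 1)))‖
      ≤ 2 ^ (-(m : ℝ) / 2) := by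
  set g : Fin N → ℝ := fun j =>
    (Nat.floor (f j * 2 ^ m) : ℝ) * 2 ^ (-(m : ℝ)) + 2 ^ (-(m : ℝ) - 1) with hgdef
  set t : ℝ := 2 ^ m with htdef
  have ht : (0:ℝ) < t := by positivity
  have hti : (0:ℝ) < t⁻¹ := by positivity
  have htt : t * t⁻¹ = 1 := mul_inv_cancel₀ (ne_of_gt ht)
  have h1 : (2:ℝ) ^ (-(m : ℝ)) = t⁻¹ := by
    rw [Real.rpow_neg (by norm_num), Real.rpow_natCast]
  have h2 : (2:ℝ) ^ (-(m : ℝ) - 1) = t⁻¹ / 2 := by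
    rw [Real.rpow_sub two_pos, h1, Real.rpow_one]
  have hg0 : ∀ j, 0 ≤ g j := by
    intro j
    rw [hgdef]
    positivity
  have hfl : ∀ j, ((Nat.floor (f j * t) : ℝ)) ≤ f j * t := by
    intro j
    exact Nat.floor_le (by nlinarith [(hf j).1])
  have hfu : ∀ j, f j * t < (Nat.floor (f j * t) : ℝ) + 1 := fun j => Nat.lt_floor_add_one _
  have hnle : ∀ j, ((Nat.floor (f j * t) : ℝ)) + 1 ≤ t := by
    intro j
    have h2m : Nat.floor (f j * t) < 2 ^ m := by
      rw [Nat.floor_lt (by nlinarith [(hf j).1])]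
      push_cast
      calc f j * t < 1 * t := by nlinarith [(hf j).2]
      _ = t := one_mul t
    have : Nat.floor (f j * t) + 1 ≤ 2 ^ m := h2m
    calc ((Nat.floor (f j * t) : ℝ)) + 1 ≤ ((2:ℕ) ^ m : ℕ) := by exact_mod_cast this
    _ = t := by push_cast; rfl
  have hg1 : ∀ j, g j ≤ 1 := by
    intro j
    rw [hgdef]
    simp only [h1, h2]
    have h3 := hnle j
    nlinarith [mul_le_mul_of_nonneg_right (show ((Nat.floor (f j * t) : ℝ)) ≤ t - 1 by
      linarith) hti.le]
  have hdiff : ∀ j, 2 * |f j - g j| ≤ (2:ℝ) ^ (-(m : ℝ)) := by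
    intro j
    rw [hgdef, h1]
    simp only [h2, h1]
    have hl := hfl j
    have hu := hfu j
    have habs : |f j - (((Nat.floor (f j * t) : ℝ)) * t⁻¹ + t⁻¹ / 2)| ≤ t⁻¹ / 2 := by
      rw [abs_le]
      constructor
      · nlinarith [mul_le_mul_of_nonneg_right hu.le hti.le]
      · nlinarith [mul_le_mul_of_nonneg_right hl hti.le]
    calc 2 * |f j - (((Nat.floor (f j * t) : ℝ)) * t⁻¹ + t⁻¹ / 2)| ≤ 2 * (t⁻¹ / 2) := by
          linarith
    _ = t⁻¹ := by ring
  -- main operator norm estimate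
  set ε : ℝ := 2 ^ (-(m : ℝ) / 2) with hε
  have hε0 : 0 ≤ ε := le_of_lt (Real.rpow_pos_of_pos two_pos _)
  have hε2 : ε ^ 2 = (2:ℝ) ^ (-(m : ℝ)) := by
    rw [hε, ← Real.rpow_natCast ((2:ℝ) ^ (-(m : ℝ) / 2)) 2,
      ← Real.rpow_mul (by norm_num : (0:ℝ) ≤ 2)]
    norm_num
  set a : Fin N → ℝ := fun j => Real.arcsin (Real.sqrt (f j)) with ha
  set b : Fin N → ℝ := fun j => Real.arcsin (Real.sqrt (g j)) with hb
  set c : Fin N → ℝ := fun j => Real.cos (a j) - Real.cos (b j) with hc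
  set s : Fin N → ℝ := fun j => Real.sin (a j) - Real.sin (b j) with hs
  have hcs : ∀ j, (c j) ^ 2 + (s j) ^ 2 ≤ ε ^ 2 := by
    intro j
    have := key_bound (f j) (g j) (hf j).1 (hf j).2.le (hg0 j) (hg1 j)
    rw [hε2]
    calc (c j)^2 + (s j)^2 ≤ 2 * |f j - g j| := this
    _ ≤ (2:ℝ) ^ (-(m:ℝ)) := hdiff j
  apply ContinuousLinearMap.opNorm_le_bound _ hε0
  intro x
  set A := phaseQuery N f - phaseQuery N g with hA
  have hTx : ∀ p, (Matrix.toEuclideanCLM (𝕜 := ℂ) A x) p = ∑ q, A p q * x q := fun _ => rfl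
  have hAe : ∀ (j j' : Fin N) (i i' : Fin 2), A ((j,i)) ((j',i')) =
      if j = j' then
        !![((c j') : ℂ), (-(s j') : ℂ); ((s j') : ℂ), ((c j') : ℂ)] i i' else 0 := by
    intro j j' i i'
    simp only [hA, Matrix.sub_apply, phaseQuery, Matrix.of_apply]
    by_cases h : j = j'
    · simp only [h, if_pos rfl, if_true, ite_true]
      fin_cases i <;> fin_cases i' <;>
        simp [RotC, hc, hs, Matrix.cons_val_zero, Matrix.cons_val_one, Matrix.head_cons] <;>
        push_cast <;> ring
    · simp [h]
  have hTval : ∀ (j : Fin N) (i : Fin 2), (Matrix.toEuclideanCLM (𝕜 := ℂ) A x) (j, i) =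
      !![((c j) : ℂ), (-(s j) : ℂ); ((s j) : ℂ), ((c j) : ℂ)] i 0 * x (j, 0)
      + !![((c j) : ℂ), (-(s j) : ℂ); ((s j) : ℂ), ((c j) : ℂ)] i 1 * x (j, 1) := by
    intro j i
    rw [hTx, Fintype.sum_prod_type]
    rw [Finset.sum_comm]
    simp only [hAe, ite_mul, zero_mul]
    simp [Finset.sum_ite_eq, Fin.sum_univ_two]
  rw [EuclideanSpace.norm_eq, EuclideanSpace.norm_eq,
    show ε = Real.sqrt (ε ^ 2) from (Real.sqrt_sq hε0).symm,
    ← Real.sqrt_mul (sq_nonneg ε)]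
  apply Real.sqrt_le_sqrt
  rw [Fintype.sum_prod_type, Fintype.sum_prod_type, Finset.mul_sum]
  apply Finset.sum_le_sum
  intro j _
  rw [Fin.sum_univ_two, Fin.sum_univ_two, hTval, hTval]
  have e00 : !![((c j) : ℂ), (-(s j) : ℂ); ((s j) : ℂ), ((c j) : ℂ)] 0 0 = ((c j : ℝ) : ℂ) := rfl
  have e01 : !![((c j) : ℂ), (-(s j) : ℂ); ((s j) : ℂ), ((c j) : ℂ)] 0 1 =
    (-((s j : ℝ) : ℂ)) := rfl
  have e10 : !![((c j) : ℂ), (-(s j) : ℂ); ((s j) : ℂ), ((c j) : ℂ)] 1 0 = ((s j : ℝ) : ℂ) := rfl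
  have e11 : !![((c j) : ℂ), (-(s j) : ℂ); ((s j) : ℂ), ((c j) : ℂ)] 1 1 = ((c j : ℝ) : ℂ) := rfl
  rw [e00, e01, e10, e11]
  rw [conformal (c j) (s j) (x (j, 0)) (x (j, 1))]
  have hx2 : (0:ℝ) ≤ ‖x (j,0)‖ ^ 2 + ‖x (j,1)‖ ^ 2 := by positivity
  exact mul_le_mul_of_nonneg_right (hcs j) hx2
end

section
/- For all φ, ψ ∈ [0, π/2], one has (2/π) · |φ − ψ| ≤ √(2 · |sin² φ − sin² ψ|). -/
open Real

lemma sin_sq_aux (φ ψ : ℝ) (hφ : φ ∈ Set.Icc 0 (Real.pi / 2))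
    (hψ : ψ ∈ Set.Icc 0 (Real.pi / 2)) (hle : ψ ≤ φ) :
    (2 / Real.pi) * |φ - ψ| ≤ Real.sqrt (2 * |Real.sin φ ^ 2 - Real.sin ψ ^ 2|) := by
  obtain ⟨hφ0, hφ1⟩ := hφ
  obtain ⟨hψ0, hψ1⟩ := hψ
  have hπ : (0:ℝ) < π := pi_pos
  set d := φ - ψ with hd
  set s := φ + ψ with hs
  have hd0 : 0 ≤ d := by linarith
  have hd1 : d ≤ π / 2 := by linarith
  have key : Real.sin φ ^ 2 - Real.sin ψ ^ 2 = Real.sin s * Real.sin d := by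
    rw [hs, hd, Real.sin_add, Real.sin_sub]
    have h1 := Real.sin_sq_add_cos_sq φ
    have h2 := Real.sin_sq_add_cos_sq ψ
    nlinarith [h1, h2]
  have hsin_d : 2 / π * d ≤ Real.sin d := Real.mul_le_sin hd0 hd1
  have hsin_s : 2 / π * d ≤ Real.sin s := by
    rcases le_or_gt s (π / 2) with h | h
    · have : d ≤ s := by rw [hd, hs]; linarith
      calc 2 / π * d ≤ 2 / π * s := by
            apply mul_le_mul_of_nonneg_left this; positivity
        _ ≤ Real.sin s := Real.mul_le_sin (by rw [hs]; linarith) h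
    · have hps : π - s ∈ Set.Icc (0:ℝ) (π/2) := by
        constructor <;> [rw [hs]; skip] <;> linarith
      have : d ≤ π - s := by rw [hd, hs]; linarith
      have h2 : 2 / π * (π - s) ≤ Real.sin (π - s) := Real.mul_le_sin hps.1 hps.2
      rw [Real.sin_pi_sub] at h2
      calc 2 / π * d ≤ 2 / π * (π - s) := by
            apply mul_le_mul_of_nonneg_left this; positivity
        _ ≤ Real.sin s := h2
  have hsd0 : 0 ≤ Real.sin d := le_trans (by positivity) hsin_d
  have hss0 : 0 ≤ Real.sin s := le_trans (by positivity) hsin_s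
  have habs : |φ - ψ| = d := abs_of_nonneg hd0
  have habs2 : |Real.sin φ ^ 2 - Real.sin ψ ^ 2| = Real.sin s * Real.sin d := by
    rw [key, abs_of_nonneg (mul_nonneg hss0 hsd0)]
  rw [habs, habs2]
  apply Real.le_sqrt_of_sq_le
  nlinarith [mul_le_mul hsin_s hsin_d (by positivity) hss0]

theorem sin_sq_lower_bound (φ ψ : ℝ) (hφ : φ ∈ Set.Icc 0 (Real.pi / 2))
    (hψ : ψ ∈ Set.Icc 0 (Real.pi / 2)) :
    (2 / Real.pi) * |φ - ψ| ≤ Real.sqrt (2 * |Real.sin φ ^ 2 - Real.sin ψ ^ 2|) := by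
  rcases le_total ψ φ with h | h
  · exact sin_sq_aux φ ψ hφ hψ h
  · have := sin_sq_aux ψ φ hψ hφ h
    rwa [abs_sub_comm, abs_sub_comm (Real.sin ψ ^ 2)] at this
end

section
/- Let d ≥ 1 be a natural number and let t : ℝ → ℝ be a trigonometric polynomial of degree at most d with t(θ) ∈ [0,1] for all θ ∈ ℝ. If a, b ∈ ℝ with a ≠ b satisfy t(a) ≥ 3/4 and t(b) ≤ 1/4, then d ≥ (1/2) · |a − b|^{−1}. -/
open Complex Finset

noncomputable section
namespace TrigSep

variable (d : ℕ)

def Z : ℂ := Complex.exp (Real.pi * Complex.I / (2 * d))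

def tri (n : ℤ) : ℤ :=
  if (n + d) % (4 * d) ≤ 2 * d then (n + d) % (4 * d) - d else 3 * d - (n + d) % (4 * d)

def W : Finset ℤ := Finset.Icc (-(d : ℤ)) (3 * d - 1)

def S (j : ℕ) : ℂ := ∑ n ∈ W d, (tri d n : ℂ) * Z d ^ (-(n * j))

def lam (j : ℕ) : ℂ := (Complex.I / (4 * d)) * S d j

lemma Z_ne_zero : Z d ≠ 0 := Complex.exp_ne_zero _

lemma Z_zpow (m : ℤ) : Z d ^ m = Complex.exp (m * (Real.pi * Complex.I / (2 * d))) := by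
  rw [Z, Complex.exp_int_mul]

variable {d} (hd : 1 ≤ d)
include hd

lemma Z_zpow_eq_one_iff (m : ℤ) : Z d ^ m = 1 ↔ (4 * d : ℤ) ∣ m := by
  rw [Z_zpow, Complex.exp_eq_one_iff]
  have hd0 : (d : ℝ) ≠ 0 := Nat.cast_ne_zero.2 (by omega)
  constructor
  · rintro ⟨k, hk⟩
    refine ⟨k, ?_⟩
    have h2 : (m : ℂ) * (Real.pi * Complex.I / (2 * d)) = (k : ℂ) * (2 * Real.pi * Complex.I) := hk
    have h3 : ((m : ℝ) * Real.pi / (2 * d) : ℝ) * Complex.I = ((k * (2 * Real.pi) : ℝ)) * Complex.I := by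
      push_cast
      rw [show ((m:ℂ) * Real.pi / (2 * d) * Complex.I) = (m : ℂ) * (Real.pi * Complex.I / (2 * d)) by ring, h2]
      ring
    have h4 : ((m : ℝ) * Real.pi / (2 * d) : ℝ) = (k * (2 * Real.pi) : ℝ) :=
      Complex.ofReal_inj.1 (mul_right_cancel₀ Complex.I_ne_zero h3)
    have h5 : (m : ℝ) = ((4 * d * k : ℤ) : ℝ) := by
      push_cast
      field_simp at h4
      nlinarith [Real.pi_pos]
    exact_mod_cast h5
  · rintro ⟨k, rfl⟩
    refine ⟨k, ?_⟩
    push_cast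
    have : (2 : ℂ) * d ≠ 0 := by
      simp [hd0]
      exact_mod_cast hd0
    have hdC' : (d : ℂ) ≠ 0 := by exact_mod_cast hd0
    field_simp
    ring

lemma Z_pow_4d : Z d ^ ((4 * d : ℤ)) = 1 := (Z_zpow_eq_one_iff hd _).2 dvd_rfl

lemma orth (m : ℤ) (h1 : -(4 * (d:ℤ)) < m) (h2 : m < 4 * d) :
    ∑ j ∈ Finset.range (4 * d), Z d ^ ((j : ℤ) * m) = if m = 0 then (4 * d : ℂ) else 0 := by
  have hterm : ∀ j : ℕ, Z d ^ ((j : ℤ) * m) = (Z d ^ m) ^ j := by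
    intro j
    rw [← zpow_natCast (Z d ^ m) j, ← zpow_mul]
    ring_nf
  simp only [hterm]
  rcases eq_or_ne m 0 with rfl | hm
  · simp
  · rw [if_neg hm]
    have hne : Z d ^ m ≠ 1 := by
      rw [Ne, Z_zpow_eq_one_iff hd]
      rintro ⟨k, rfl⟩
      rcases lt_trichotomy k 0 with h | h | h
      · nlinarith [Int.le_of_lt_add_one (by omega : k < 0 + 1)]
      · simp [h] at hm
      · nlinarith
    rw [geom_sum_eq hne]
    have h9 : (Z d ^ m) ^ (4 * d) = 1 := by
      calc (Z d ^ m) ^ (4 * d) = Z d ^ (m * (4 * d : ℤ)) := by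
            rw [← zpow_natCast, ← zpow_mul]; norm_cast
        _ = (Z d ^ ((4 * d : ℤ))) ^ m := by rw [mul_comm, zpow_mul]
        _ = 1 := by rw [Z_pow_4d hd, one_zpow]
    simp [h9]

include hd


lemma tri_eval {n : ℤ} (h1 : -(d:ℤ) ≤ n) (h2 : n ≤ 3 * d) :
    tri d n = if n ≤ d then n else 2 * d - n := by
  rcases eq_or_lt_of_le h2 with rfl | h2'
  · have h0 : ((3*d:ℤ) + d) % (4 * d) = 0 := by
      rw [show ((3*d:ℤ) + d) = (4*d) * 1 by ring]
      exact Int.mul_emod_right _ _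
    rw [tri, h0, if_pos (by omega), if_neg (by omega)]
    omega
  · have hm : ((n:ℤ) + d) % (4 * d) = n + d := Int.emod_eq_of_lt (by omega) (by omega)
    simp only [tri, hm]
    split_ifs with h h' h' <;> omega

omit hd in
lemma tri_periodic (n : ℤ) : tri d (n + 4 * d) = tri d n := by
  have : (n + 4 * d + d) % (4 * d) = (n + d) % (4 * d) := by
    rw [show (n + 4*d + d : ℤ) = (n + d) + 4*d * 1 by ring, Int.add_mul_emod_self_left]
  simp only [tri, this]

omit hd

lemma sum_Icc_shift {β : Type*} [AddCommMonoid β] (f : ℤ → β) (a b c : ℤ) :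
    ∑ m ∈ Finset.Icc (a + c) (b + c), f m = ∑ m ∈ Finset.Icc a b, f (m + c) := by
  rw [← Finset.map_add_right_Icc, Finset.sum_map]
  rfl

lemma sum_shift_one {β : Type*} [AddCancelCommMonoid β] (L : ℤ) (H : ℤ → β) (hH : ∀ m, H (m + L) = H m) (a : ℤ) :
    ∑ m ∈ Finset.Icc a (a + L - 1), H m = ∑ m ∈ Finset.Icc (a + 1) (a + L), H m := by
  rcases le_or_gt L 0 with hL | hL
  · rw [Finset.Icc_eq_empty (by omega), Finset.Icc_eq_empty (by omega)]
  · have e1 : Finset.Icc a (a + L) = insert a (Finset.Icc (a + 1) (a + L)) := by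
      ext x; simp only [Finset.mem_Icc, Finset.mem_insert]; omega
    have e2 : Finset.Icc a (a + L) = insert (a + L) (Finset.Icc a (a + L - 1)) := by
      ext x; simp only [Finset.mem_Icc, Finset.mem_insert]; omega
    have h1 : H a + ∑ m ∈ Finset.Icc (a+1) (a+L), H m = H (a + L) + ∑ m ∈ Finset.Icc a (a+L-1), H m := by
      rw [← Finset.sum_insert (by simp only [Finset.mem_Icc, not_and, not_le]; omega),
        ← Finset.sum_insert (by simp only [Finset.mem_Icc, not_and, not_le]; omega), ← e1, ← e2]
    rw [hH a] at h1
    exact (add_left_cancel h1).symm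

omit hd in
lemma sum_shift_one' {β : Type*} [AddCancelCommMonoid β] (L : ℤ) (H : ℤ → β) (hH : ∀ m, H (m + L) = H m)
    (a : ℤ) : ∑ m ∈ Finset.Icc (a + 1) (a + L), H m = ∑ m ∈ Finset.Icc a (a + L - 1), H m :=
  (sum_shift_one L H hH a).symm

end TrigSep

namespace TrigSep
open Complex Finset
variable {d : ℕ} (hd : 1 ≤ d)
include hd

lemma sum_lam_zpow {n : ℤ} (h1 : -(d:ℤ) ≤ n) (h2 : n ≤ d) :
    ∑ j ∈ Finset.range (4 * d), lam d j * Z d ^ ((j : ℤ) * n) = Complex.I * n := by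
  have hd4 : ((4 * d : ℕ) : ℂ) ≠ 0 := Nat.cast_ne_zero.2 (by omega)
  have hdC : (d : ℂ) ≠ 0 := Nat.cast_ne_zero.2 (by omega)
  simp only [lam, S, Finset.sum_mul, Finset.mul_sum]
  rw [Finset.sum_comm]
  have hstep : ∀ n' ∈ W d,
      ∑ j ∈ Finset.range (4 * d), Complex.I / (4 * d) * ((tri d n' : ℂ) * Z d ^ (-(n' * j))) * Z d ^ ((j:ℤ) * n)
      = if n' = n then Complex.I * n else 0 := by
    intro n' hn'
    simp only [Finset.mem_Icc, W] at hn'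
    have hcomb : ∀ j : ℕ, Complex.I / (4 * d) * ((tri d n' : ℂ) * Z d ^ (-(n' * j))) * Z d ^ ((j:ℤ) * n)
        = (Complex.I / (4 * d) * (tri d n' : ℂ)) * Z d ^ ((j:ℤ) * (n - n')) := by
      intro j
      rw [show ((j:ℤ) * (n - n')) = (-(n' * j)) + ((j:ℤ) * n) by ring, zpow_add₀ (Z_ne_zero d)]
      ring
    simp only [hcomb, ← Finset.mul_sum]
    rw [orth hd (n - n') (by omega) (by omega)]
    split_ifs with h h' h'
    · subst h'
      rw [tri_eval hd h1 (by omega), if_pos h2]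
      push_cast
      field_simp
    · exact absurd (by omega : n' = n) h'
    · exact absurd (by omega : n - n' = 0) h
    · simp
  rw [Finset.sum_congr rfl hstep, Finset.sum_ite_eq' (W d) n _]
  rw [if_pos (by simp only [W, Finset.mem_Icc]; omega)]

end TrigSep

namespace TrigSep
open Complex Finset
variable {d : ℕ} (hd : 1 ≤ d)

include hd in
lemma tri_neg_d_sub_one : tri d (-(d:ℤ) - 1) = 1 - d := by
  have h1 : (-(d:ℤ) - 1 + d) % (4 * d) = 4 * d - 1 := by
    rw [show (-(d:ℤ) - 1 + d) = (4*(d:ℤ) - 1) + (4*d) * (-1) by ring, Int.add_mul_emod_self_left]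
    exact Int.emod_eq_of_lt (by omega) (by omega)
  rw [tri, h1, if_neg (by omega)]
  omega

include hd

lemma tri_second_diff {m : ℤ} (hm1 : -(d:ℤ) ≤ m) (hm2 : m ≤ 3*d - 1) :
    2 * tri d m - tri d (m+1) - tri d (m-1)
      = (if m = (d:ℤ) then 2 else 0) - (if m = -(d:ℤ) then 2 else 0) := by
  rcases eq_or_lt_of_le hm1 with rfl | h
  · have e1 : tri d (-(d:ℤ)) = -(d:ℤ) := by
      rw [tri_eval hd (le_refl _) (by omega), if_pos (by omega)]
    have e2 : tri d (-(d:ℤ) + 1) = -(d:ℤ) + 1 := by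
      rw [tri_eval hd (by omega) (by omega), if_pos (by omega)]
    have e3 : tri d (-(d:ℤ) - 1) = 1 - (d:ℤ) := tri_neg_d_sub_one hd
    rw [e1, e2, e3]
    split_ifs <;> omega
  · have e1 : tri d m = if m ≤ (d:ℤ) then m else 2*d - m := tri_eval hd (by omega) (by omega)
    have e2 : tri d (m+1) = if m+1 ≤ (d:ℤ) then m+1 else 2*d - (m+1) :=
      tri_eval hd (by omega) (by omega)
    have e3 : tri d (m-1) = if m-1 ≤ (d:ℤ) then m-1 else 2*d - (m-1) :=
      tri_eval hd (by omega) (by omega)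
    rw [e1, e2, e3]
    split_ifs <;> omega

lemma key (j : ℕ) : (2 - Z d ^ (j:ℤ) - Z d ^ (-(j:ℤ))) * S d j
    = 2 * Z d ^ (-((d:ℤ) * j)) - 2 * Z d ^ ((d:ℤ) * j) := by
  have hZ := Z_ne_zero d
  have hzper : ∀ m : ℤ, Z d ^ (-((m + 4*d) * (j:ℤ))) = Z d ^ (-(m*(j:ℤ))) := by
    intro m
    rw [show (-((m + 4*d) * (j:ℤ))) = (-(m*(j:ℤ))) + (4*(d:ℤ)) * (-(j:ℤ)) by ring,
      zpow_add₀ hZ, zpow_mul, Z_pow_4d hd, one_zpow, mul_one]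
  have hA : Z d ^ ((j:ℤ)) * S d j
      = ∑ m ∈ W d, (tri d (m+1) : ℂ) * Z d ^ (-(m*(j:ℤ))) := by
    calc Z d ^ ((j:ℤ)) * S d j
        = ∑ n ∈ Finset.Icc ((-(d:ℤ)-1) + 1) ((3*(d:ℤ)-2) + 1),
            (tri d n : ℂ) * Z d ^ (-((n-1) * (j:ℤ))) := by
          rw [S, Finset.mul_sum]
          apply Finset.sum_congr
            (by rw [W, show ((-(d:ℤ)-1) + 1) = -(d:ℤ) by ring,
              show ((3*(d:ℤ)-2) + 1) = 3*(d:ℤ)-1 by ring])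
          intro n _
          rw [show (-((n-1)*(j:ℤ))) = (j:ℤ) + (-(n*(j:ℤ))) by ring, zpow_add₀ hZ]
          ring
      _ = ∑ m ∈ Finset.Icc (-(d:ℤ)-1) (3*(d:ℤ)-2),
            (tri d (m+1) : ℂ) * Z d ^ (-((m+1-1) * (j:ℤ))) := by
          rw [sum_Icc_shift]
      _ = ∑ m ∈ Finset.Icc (-(d:ℤ)-1) (3*(d:ℤ)-2),
            (tri d (m+1) : ℂ) * Z d ^ (-(m * (j:ℤ))) := by
          apply Finset.sum_congr rfl
          intro n _
          rw [show (n + 1 - 1 : ℤ) = n by ring]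
      _ = ∑ m ∈ W d, (tri d (m+1) : ℂ) * Z d ^ (-(m*(j:ℤ))) := by
          have hper : ∀ m : ℤ, (tri d (m + (4*(d:ℤ)) + 1) : ℂ) * Z d ^ (-((m + 4*(d:ℤ))*(j:ℤ)))
              = (tri d (m+1) : ℂ) * Z d ^ (-(m*(j:ℤ))) := by
            intro m
            rw [show (m + 4*(d:ℤ) + 1) = (m + 1) + 4*(d:ℤ) by ring, tri_periodic, hzper]
          have hsh := sum_shift_one (4*(d:ℤ)) (fun m => (tri d (m+1) : ℂ) * Z d ^ (-(m*(j:ℤ))))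
            (fun m => hper m) (-(d:ℤ)-1)
          rw [show (-(d:ℤ)-1 + 4*(d:ℤ) - 1) = 3*(d:ℤ)-2 by ring,
            show (-(d:ℤ)-1 + 1) = -(d:ℤ) by ring,
            show (-(d:ℤ)-1 + 4*(d:ℤ)) = 3*(d:ℤ)-1 by ring] at hsh
          rw [hsh, W]
  have hB : Z d ^ (-(j:ℤ)) * S d j
      = ∑ m ∈ W d, (tri d (m-1) : ℂ) * Z d ^ (-(m*(j:ℤ))) := by
    calc Z d ^ (-(j:ℤ)) * S d j
        = ∑ n ∈ Finset.Icc ((-(d:ℤ)+1) + (-1)) ((3*(d:ℤ)) + (-1)),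
            (tri d n : ℂ) * Z d ^ (-((n+1) * (j:ℤ))) := by
          rw [S, Finset.mul_sum]
          apply Finset.sum_congr
            (by rw [W, show ((-(d:ℤ)+1) + (-1)) = -(d:ℤ) by ring,
              show ((3*(d:ℤ)) + (-1)) = 3*(d:ℤ)-1 by ring])
          intro n _
          rw [show (-((n+1)*(j:ℤ))) = (-(j:ℤ)) + (-(n*(j:ℤ))) by ring, zpow_add₀ hZ]
          ring
      _ = ∑ m ∈ Finset.Icc (-(d:ℤ)+1) (3*(d:ℤ)),
            (tri d (m + -1) : ℂ) * Z d ^ (-((m + -1 + 1) * (j:ℤ))) := by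
          rw [sum_Icc_shift]
      _ = ∑ m ∈ Finset.Icc (-(d:ℤ)+1) (3*(d:ℤ)),
            (tri d (m-1) : ℂ) * Z d ^ (-(m * (j:ℤ))) := by
          apply Finset.sum_congr rfl
          intro n _
          rw [show (n + -1 + 1 : ℤ) = n by ring, show (n + -1 : ℤ) = n - 1 by ring]
      _ = ∑ m ∈ W d, (tri d (m-1) : ℂ) * Z d ^ (-(m*(j:ℤ))) := by
          have hper : ∀ m : ℤ, (tri d (m + (4*(d:ℤ)) - 1) : ℂ) * Z d ^ (-((m + 4*(d:ℤ))*(j:ℤ)))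
              = (tri d (m-1) : ℂ) * Z d ^ (-(m*(j:ℤ))) := by
            intro m
            rw [show (m + 4*(d:ℤ) - 1) = (m - 1) + 4*(d:ℤ) by ring, tri_periodic, hzper]
          have hsh := sum_shift_one' (4*(d:ℤ)) (fun m => (tri d (m-1) : ℂ) * Z d ^ (-(m*(j:ℤ))))
            (fun m => hper m) (-(d:ℤ))
          rw [show (-(d:ℤ) + 4*(d:ℤ) - 1) = 3*(d:ℤ)-1 by ring,
            show (-(d:ℤ) + 4*(d:ℤ)) = 3*(d:ℤ) by ring] at hsh
          rw [hsh, W]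
  have hsplit : (2 - Z d ^ (j:ℤ) - Z d ^ (-(j:ℤ))) * S d j
      = ∑ m ∈ W d, ((2 * tri d m - tri d (m+1) - tri d (m-1) : ℤ) : ℂ) * Z d ^ (-(m*(j:ℤ))) := by
    have expand : (2 - Z d ^ (j:ℤ) - Z d ^ (-(j:ℤ))) * S d j
        = 2 * S d j - (Z d ^ ((j:ℤ)) * S d j) - (Z d ^ (-(j:ℤ)) * S d j) := by ring
    rw [expand, hA, hB, S, Finset.mul_sum, ← Finset.sum_sub_distrib, ← Finset.sum_sub_distrib]
    apply Finset.sum_congr rfl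
    intro m _
    push_cast
    ring
  rw [hsplit]
  have hpt : ∀ m ∈ W d, ((2 * tri d m - tri d (m+1) - tri d (m-1) : ℤ) : ℂ) * Z d ^ (-(m*(j:ℤ)))
      = (if m = (d:ℤ) then 2 * Z d ^ (-(m*(j:ℤ))) else 0)
        - (if m = -(d:ℤ) then 2 * Z d ^ (-(m*(j:ℤ))) else 0) := by
    intro m hm
    simp only [W, Finset.mem_Icc] at hm
    rw [tri_second_diff hd hm.1 hm.2]
    split_ifs with h1 h2 h2 <;> first
      | (exfalso; omega)
      | (push_cast; ring)
  rw [Finset.sum_congr rfl hpt, Finset.sum_sub_distrib,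
    Finset.sum_ite_eq' (W d) ((d:ℤ)), Finset.sum_ite_eq' (W d) (-(d:ℤ)),
    if_pos (by simp only [W, Finset.mem_Icc]; omega),
    if_pos (by simp only [W, Finset.mem_Icc]; omega),
    show (-(-(d:ℤ) * (j:ℤ))) = (d:ℤ) * j by ring]

end TrigSep

namespace TrigSep
open Complex Finset
variable {d : ℕ} (hd : 1 ≤ d)
include hd

lemma S_zero : S d 0 = 0 := by
  have hint : ∑ n ∈ W d, tri d n = 0 := by
    have hsplit : W d = Finset.Icc (-(d:ℤ)) ((d:ℤ)-1) ∪ Finset.Icc ((d:ℤ)) (3*(d:ℤ)-1) := by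
      ext x; simp only [W, Finset.mem_Icc, Finset.mem_union]; omega
    have hdisj : Disjoint (Finset.Icc (-(d:ℤ)) ((d:ℤ)-1)) (Finset.Icc ((d:ℤ)) (3*(d:ℤ)-1)) := by
      rw [Finset.disjoint_left]
      intro x hx hx'
      simp only [Finset.mem_Icc] at hx hx'
      omega
    have hsecond : ∑ n ∈ Finset.Icc (-(d:ℤ) + 2*(d:ℤ)) (((d:ℤ)-1) + 2*(d:ℤ)), tri d n
        = ∑ n ∈ Finset.Icc (-(d:ℤ)) ((d:ℤ)-1), tri d (n + 2*(d:ℤ)) := sum_Icc_shift _ _ _ _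
    rw [show (-(d:ℤ) + 2*(d:ℤ)) = (d:ℤ) by ring,
      show (((d:ℤ)-1) + 2*(d:ℤ)) = 3*(d:ℤ)-1 by ring] at hsecond
    rw [hsplit, Finset.sum_union hdisj, hsecond, ← Finset.sum_add_distrib]
    apply Finset.sum_eq_zero
    intro n hn
    simp only [Finset.mem_Icc] at hn
    have e1 : tri d n = if n ≤ (d:ℤ) then n else 2*d - n := tri_eval hd (by omega) (by omega)
    have e2 : tri d (n + 2*(d:ℤ)) = if n + 2*(d:ℤ) ≤ (d:ℤ) then n + 2*(d:ℤ) else 2*d - (n + 2*(d:ℤ)) :=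
      tri_eval hd (by omega) (by omega)
    rw [e1, e2]
    split_ifs <;> omega
  rw [S]
  have : ∀ n ∈ W d, (tri d n : ℂ) * Z d ^ (-(n * ((0:ℕ):ℤ))) = (tri d n : ℂ) := by
    intro n _
    simp
  rw [Finset.sum_congr rfl this]
  exact_mod_cast congrArg (fun z : ℤ => (z : ℂ)) hint

lemma lam_zero : lam d 0 = 0 := by rw [lam, S_zero hd, mul_zero]

lemma Z_pow_d : Z d ^ ((d:ℤ)) = Complex.I := by
  rw [Z_zpow]
  have hd0 : (d : ℂ) ≠ 0 := Nat.cast_ne_zero.2 (by omega)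
  rw [show ((((d:ℤ)):ℂ) * (Real.pi * Complex.I / (2 * d))) = ((Real.pi/2 : ℝ) : ℂ) * Complex.I by
    push_cast; field_simp]
  rw [Complex.exp_mul_I, ← Complex.ofReal_cos, ← Complex.ofReal_sin,
    Real.cos_pi_div_two, Real.sin_pi_div_two]
  simp

lemma Z_pow_dj (j : ℕ) : Z d ^ ((d:ℤ) * j) = Complex.I ^ j := by
  rw [zpow_mul, Z_pow_d hd, zpow_natCast]

lemma Z_pow_neg_dj (j : ℕ) : Z d ^ (-((d:ℤ) * j)) = (-Complex.I) ^ j := by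
  rw [zpow_neg, Z_pow_dj hd, ← inv_pow, Complex.inv_I]

lemma Z_pow_ne_one {j : ℕ} (hj0 : 0 < j) (hj : j < 4*d) : Z d ^ ((j:ℤ)) ≠ 1 := by
  rw [Ne, Z_zpow_eq_one_iff hd]
  intro hdvd
  have := Int.le_of_dvd (by exact_mod_cast hj0) hdvd
  omega

lemma lam_even {j : ℕ} (hj : j < 4*d) (hje : Even j) : lam d j = 0 := by
  rcases Nat.eq_zero_or_pos j with rfl | hj0
  · exact lam_zero hd
  · have hkey := key hd j
    rw [Z_pow_dj hd, Z_pow_neg_dj hd, hje.neg_pow, sub_self] at hkey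
    have hx := Z_pow_ne_one hd hj0 hj
    have hZ := Z_ne_zero d
    have hden : (2 - Z d ^ ((j:ℤ)) - Z d ^ (-((j:ℤ)))) ≠ 0 := by
      have hinv : Z d ^ (-((j:ℤ))) = (Z d ^ ((j:ℤ)))⁻¹ := by rw [zpow_neg]
      have hne : Z d ^ ((j:ℤ)) ≠ 0 := zpow_ne_zero _ hZ
      rw [hinv]
      intro h
      apply hx
      have h2 : (Z d ^ ((j:ℤ))) * (2 - Z d ^ ((j:ℤ)) - (Z d ^ ((j:ℤ)))⁻¹) = 0 := by rw [h, mul_zero]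
      rw [mul_sub, mul_sub, mul_inv_cancel₀ hne] at h2
      have h3 : (Z d ^ ((j:ℤ)) - 1)^2 = 0 := by linear_combination -h2
      have h4 := pow_eq_zero_iff (n := 2) (by norm_num) |>.1 h3
      exact sub_eq_zero.1 h4
    have hS : S d j = 0 := by
      rcases mul_eq_zero.1 hkey with h | h
      · exact absurd h hden
      · exact h
    rw [lam, hS, mul_zero]

end TrigSep


namespace TrigSep
open Complex Finset
variable {d : ℕ} (hd : 1 ≤ d)
include hd

lemma lam_abs {j : ℕ} (hj : j < 4*d) :
    ((‖lam d j‖ : ℝ) : ℂ)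
      = lam d j * ((Complex.I ^ j - (-Complex.I) ^ j) / (2 * Complex.I)) := by
  rcases Nat.even_or_odd j with hje | hjo
  · rw [lam_even hd hj hje, hje.neg_pow, sub_self]
    simp
  · obtain ⟨m, rfl⟩ := hjo
    have hdR : (0:ℝ) < d := by exact_mod_cast Nat.pos_of_ne_zero (by omega)
    have hdC : (d:ℂ) ≠ 0 := Nat.cast_ne_zero.2 (by omega)
    have h1 : Complex.I ^ (2*m+1) = (-1:ℂ)^m * Complex.I := by
      rw [pow_succ, pow_mul, Complex.I_sq]
    have h2 : (-Complex.I) ^ (2*m+1) = -((-1:ℂ)^m * Complex.I) := by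
      rw [neg_pow, ← h1, Odd.neg_one_pow ⟨m, by ring⟩]
      ring
    have hs : ((Complex.I ^ (2*m+1) - (-Complex.I)^(2*m+1)) / (2*Complex.I)) = ((-1:ℂ))^m := by
      rw [h1, h2]
      field_simp
      ring
    set θ : ℝ := Real.pi * (2*m+1) / (2*d) with hθ
    have hθpos : 0 < θ := by
      apply div_pos (by positivity) (by positivity)
    have hθlt : θ < 2 * Real.pi := by
      rw [hθ, div_lt_iff₀ (by positivity)]
      have h4 : (2*(m:ℝ)+1) < 4*d := by exact_mod_cast hj
      nlinarith [mul_lt_mul_of_pos_left h4 Real.pi_pos]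
    have hcos : Real.cos θ < 1 := by
      rcases lt_or_eq_of_le (Real.cos_le_one θ) with h | h
      · exact h
      · exfalso
        have := (Real.cos_eq_one_iff_of_lt_of_lt (by linarith) hθlt).1 h
        linarith
    have hrpos : (0:ℝ) < 2 - 2 * Real.cos θ := by linarith
    have hr : ((2 - 2*Real.cos θ : ℝ) : ℂ) = 2 - Z d ^ (((2*m+1:ℕ)):ℤ) - Z d ^ (-(((2*m+1:ℕ)):ℤ)) := by
      rw [Z_zpow, Z_zpow, Int.cast_neg]
      rw [show ((((2*m+1:ℕ):ℤ)):ℂ) * (Real.pi * Complex.I / (2 * d)) = (θ:ℂ) * Complex.I by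
        rw [hθ]; push_cast; field_simp]
      rw [show (-(((2*m+1:ℕ):ℤ):ℂ)) * (Real.pi * Complex.I / (2 * d)) = ((-θ:ℝ):ℂ) * Complex.I by
        rw [hθ]; push_cast; field_simp]
      rw [Complex.exp_mul_I, Complex.exp_mul_I, ← Complex.ofReal_cos, ← Complex.ofReal_sin,
        ← Complex.ofReal_cos, ← Complex.ofReal_sin, Real.cos_neg, Real.sin_neg]
      push_cast
      ring
    have hkey := key hd (2*m+1)
    rw [Z_pow_dj hd, Z_pow_neg_dj hd, ← hr] at hkey
    have hrne : ((2 - 2*Real.cos θ : ℝ) : ℂ) ≠ 0 := by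
      exact_mod_cast ne_of_gt hrpos
    have hS : S d (2*m+1) = (-4) * Complex.I * (-1:ℂ)^m / ((2 - 2*Real.cos θ : ℝ) : ℂ) := by
      rw [eq_div_iff hrne, mul_comm]
      rw [hkey, h1, h2]
      ring
    have hlam : lam d (2*m+1) = (((-1:ℝ)^m / (d * (2 - 2*Real.cos θ)) : ℝ) : ℂ) := by
      rw [lam, hS, div_mul_div_comm, Complex.ofReal_div, Complex.ofReal_mul,
        Complex.ofReal_pow, Complex.ofReal_neg, Complex.ofReal_one, Complex.ofReal_natCast]
      rw [show Complex.I * (-4 * Complex.I * (-1:ℂ)^m) = 4 * (-1:ℂ)^m by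
        linear_combination (-4 * (-1:ℂ)^m) * Complex.I_sq]
      rw [div_eq_div_iff (by
          apply mul_ne_zero
          · apply mul_ne_zero (by norm_num) hdC
          · exact hrne)
        (mul_ne_zero hdC hrne)]
      ring
    have habs1 : |(-1:ℝ)^m| = 1 := by
      rw [_root_.abs_pow, _root_.abs_neg, _root_.abs_one, one_pow]
    have habs2 : |(d:ℝ) * (2 - 2*Real.cos θ)| = (d:ℝ) * (2 - 2*Real.cos θ) :=
      _root_.abs_of_pos (by positivity)
    have hmmC : ((-1:ℂ)^m) * ((-1:ℂ)^m) = 1 := by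
      rw [← pow_add]
      exact Even.neg_one_pow ⟨m, by ring⟩
    rw [hlam, hs, Complex.norm_real, Real.norm_eq_abs, _root_.abs_div, habs1, habs2,
      Complex.ofReal_div, Complex.ofReal_div, Complex.ofReal_one,
      Complex.ofReal_pow, Complex.ofReal_neg, Complex.ofReal_one, div_mul_eq_mul_div]
    congr 1
    exact hmmC.symm

lemma sum_abs_lam : ∑ j ∈ Finset.range (4*d), ‖lam d j‖ = d := by
  have h1 : ∑ j ∈ Finset.range (4*d), lam d j * Complex.I ^ j
      = Complex.I * (((d:ℤ)):ℂ) := by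
    have h := sum_lam_zpow hd (show -(d:ℤ) ≤ (d:ℤ) by omega) (le_refl (d:ℤ))
    rw [← h]
    apply Finset.sum_congr rfl
    intro j _
    rw [show ((j:ℤ) * (d:ℤ)) = (d:ℤ) * j by ring, Z_pow_dj hd]
  have h2 : ∑ j ∈ Finset.range (4*d), lam d j * (-Complex.I) ^ j
      = Complex.I * (((-(d:ℤ)):ℤ):ℂ) := by
    have h := sum_lam_zpow hd (show -(d:ℤ) ≤ -(d:ℤ) by omega) (show -(d:ℤ) ≤ (d:ℤ) by omega)
    rw [← h]
    apply Finset.sum_congr rfl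
    intro j _
    rw [show ((j:ℤ) * (-(d:ℤ))) = -((d:ℤ) * j) by ring, Z_pow_neg_dj hd]
  have hC : ((∑ j ∈ Finset.range (4*d), ‖lam d j‖ : ℝ) : ℂ) = ((d:ℝ):ℂ) := by
    rw [Complex.ofReal_sum]
    calc ∑ j ∈ Finset.range (4*d), ((‖lam d j‖ : ℝ) : ℂ)
        = ∑ j ∈ Finset.range (4*d),
            lam d j * ((Complex.I ^ j - (-Complex.I) ^ j) / (2 * Complex.I)) := by
          apply Finset.sum_congr rfl
          intro j hj
          exact lam_abs hd (Finset.mem_range.1 hj)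
      _ = (∑ j ∈ Finset.range (4*d),
            (lam d j * Complex.I ^ j - lam d j * (-Complex.I) ^ j)) / (2 * Complex.I) := by
          rw [Finset.sum_div]
          apply Finset.sum_congr rfl
          intro j _
          rw [← mul_div_assoc, mul_sub]
      _ = ((Complex.I * (((d:ℤ)):ℂ)) - (Complex.I * (((-(d:ℤ)):ℤ):ℂ))) / (2 * Complex.I) := by
          rw [Finset.sum_sub_distrib, h1, h2]
      _ = ((d:ℝ):ℂ) := by
          push_cast
          rw [div_eq_iff (by simp [Complex.I_ne_zero] : (2 * Complex.I) ≠ 0)]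
          ring
  exact_mod_cast hC

end TrigSep

open TrigSep Complex Finset

theorem trig_poly_separation_degree_bound (d : ℕ) (hd : 1 ≤ d) (t : ℝ → ℝ)
    (ht : IsTrigPolyDeg d t) (hrange : ∀ θ : ℝ, t θ ∈ Set.Icc (0:ℝ) 1)
    (a b : ℝ) (hab : a ≠ b) (ha : 3/4 ≤ t a) (hb : t b ≤ 1/4) :
    (1/2) * |a - b|⁻¹ ≤ (d : ℝ) := by
  obtain ⟨c, hc0, hc⟩ := ht
  have hdC : (d:ℂ) ≠ 0 := Nat.cast_ne_zero.2 (by omega)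
  set F : ℝ → ℂ := fun θ => ∑ n ∈ Finset.Icc (-(d:ℤ)) (d:ℤ), c n * Complex.exp (n * θ * Complex.I)
    with hF
  set Dv : ℝ → ℂ := fun θ => ∑ n ∈ Finset.Icc (-(d:ℤ)) (d:ℤ),
      c n * ((n:ℂ) * Complex.I) * Complex.exp (n * θ * Complex.I) with hDv
  have hder : ∀ θ : ℝ, HasDerivAt F (Dv θ) θ := by
    intro θ
    apply HasDerivAt.fun_sum
    intro n _
    have hlin : HasDerivAt (fun z : ℂ => (n:ℂ) * z * Complex.I) ((n:ℂ) * Complex.I) ((θ:ℝ):ℂ) := by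
      simpa using ((hasDerivAt_id ((θ:ℝ):ℂ)).const_mul ((n:ℂ))).mul_const Complex.I
    have hinner := (Complex.hasDerivAt_exp ((n:ℂ) * ((θ:ℝ):ℂ) * Complex.I)).comp ((θ:ℝ):ℂ) hlin
    have hre := hinner.comp_ofReal
    have := hre.const_mul (c n)
    simpa [Function.comp, mul_comm, mul_assoc, mul_left_comm] using this
  have ht_deriv : ∀ θ : ℝ, HasDerivAt t ((Dv θ).re) θ := by
    intro θ
    have heq : t = fun θ => (F θ).re := by
      funext x
      simp only [hF]
      rw [← hc x, Complex.ofReal_re]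
    have h2 := Complex.reCLM.hasFDerivAt.comp_hasDerivAt θ (hder θ)
    rw [heq]
    exact h2
  -- kernel representation of the derivative
  have hsum0 : ∑ j ∈ Finset.range (4*d), lam d j = 0 := by
    have h0 := sum_lam_zpow hd (show -(d:ℤ) ≤ 0 by omega) (show (0:ℤ) ≤ d by omega)
    simpa using h0
  have hDrep : ∀ θ : ℝ, Dv θ = ∑ j ∈ Finset.range (4*d),
      lam d j * (((t (θ + Real.pi * j / (2*d)) : ℝ) : ℂ) - 1/2) := by
    intro θ
    have hmain : ∑ j ∈ Finset.range (4*d),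
        lam d j * ((t (θ + Real.pi * j / (2*d)) : ℝ) : ℂ) = Dv θ := by
      have hexp : ∀ j ∈ Finset.range (4*d), ∀ n ∈ Finset.Icc (-(d:ℤ)) (d:ℤ),
          Complex.exp ((n:ℂ) * ((θ + Real.pi * j / (2*d) : ℝ):ℂ) * Complex.I)
            = Complex.exp ((n:ℂ) * (θ:ℂ) * Complex.I) * Z d ^ ((j:ℤ) * n) := by
        intro j _ n _
        rw [Z_zpow, ← Complex.exp_add]
        congr 1
        push_cast
        field_simp
      calc ∑ j ∈ Finset.range (4*d), lam d j * ((t (θ + Real.pi * j / (2*d)) : ℝ) : ℂ)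
          = ∑ j ∈ Finset.range (4*d), ∑ n ∈ Finset.Icc (-(d:ℤ)) (d:ℤ),
              lam d j * (c n * Complex.exp ((n:ℂ) * (θ:ℂ) * Complex.I) * Z d ^ ((j:ℤ) * n)) := by
            apply Finset.sum_congr rfl
            intro j hj
            rw [hc, Finset.mul_sum]
            apply Finset.sum_congr rfl
            intro n hn
            rw [hexp j hj n hn]
            ring
        _ = ∑ n ∈ Finset.Icc (-(d:ℤ)) (d:ℤ), c n * Complex.exp ((n:ℂ) * (θ:ℂ) * Complex.I)
              * ∑ j ∈ Finset.range (4*d), lam d j * Z d ^ ((j:ℤ) * n) := by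
            rw [Finset.sum_comm]
            apply Finset.sum_congr rfl
            intro n _
            rw [Finset.mul_sum]
            apply Finset.sum_congr rfl
            intro j _
            ring
        _ = Dv θ := by
            rw [hDv]
            apply Finset.sum_congr rfl
            intro n hn
            simp only [Finset.mem_Icc] at hn
            rw [sum_lam_zpow hd hn.1 hn.2]
            ring
    have hhalf : ∑ j ∈ Finset.range (4*d), lam d j * (1/2 : ℂ) = 0 := by
      rw [← Finset.sum_mul, hsum0, zero_mul]
    calc Dv θ = ∑ j ∈ Finset.range (4*d), lam d j * ((t (θ + Real.pi * j / (2*d)) : ℝ) : ℂ)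
          - ∑ j ∈ Finset.range (4*d), lam d j * (1/2 : ℂ) := by rw [hmain, hhalf, sub_zero]
      _ = ∑ j ∈ Finset.range (4*d),
          lam d j * (((t (θ + Real.pi * j / (2*d)) : ℝ) : ℂ) - 1/2) := by
        rw [← Finset.sum_sub_distrib]
        apply Finset.sum_congr rfl
        intro j _
        ring
  have hbound : ∀ θ : ℝ, ‖(Dv θ).re‖ ≤ (d:ℝ)/2 := by
    intro θ
    have h1 : ‖Dv θ‖ ≤ (d:ℝ)/2 := by
      rw [hDrep θ]
      calc ‖∑ j ∈ Finset.range (4*d),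
            lam d j * (((t (θ + Real.pi * j / (2*d)) : ℝ) : ℂ) - 1/2)‖
          ≤ ∑ j ∈ Finset.range (4*d),
            ‖lam d j * (((t (θ + Real.pi * j / (2*d)) : ℝ) : ℂ) - 1/2)‖ := by
            exact norm_sum_le _ _
        _ ≤ ∑ j ∈ Finset.range (4*d), ‖lam d j‖ * (1/2) := by
            apply Finset.sum_le_sum
            intro j _
            rw [norm_mul]
            apply mul_le_mul_of_nonneg_left _ (norm_nonneg _)
            have hx := hrange (θ + Real.pi * j / (2*d))
            simp only [Set.mem_Icc] at hx
            rw [show (((t (θ + Real.pi * j / (2*d)) : ℝ) : ℂ) - 1/2)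
                = (((t (θ + Real.pi * j / (2*d)) - 1/2 : ℝ)) : ℂ) by push_cast; ring,
              Complex.norm_real, Real.norm_eq_abs]
            rw [abs_le]
            constructor <;> [linarith [hx.1]; linarith [hx.2]]
        _ = (d:ℝ)/2 := by
            rw [← Finset.sum_mul, sum_abs_lam hd]
            ring
    calc ‖(Dv θ).re‖ = |(Dv θ).re| := rfl
      _ ≤ ‖Dv θ‖ := Complex.abs_re_le_norm _
      _ ≤ (d:ℝ)/2 := h1
  have hlip : ‖t a - t b‖ ≤ ((d:ℝ)/2) * ‖a - b‖ :=
    Convex.norm_image_sub_le_of_norm_hasDerivWithin_le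
      (fun z _ => (ht_deriv z).hasDerivWithinAt) (fun z _ => hbound z)
      convex_univ (Set.mem_univ b) (Set.mem_univ a)
  have h5 : (1:ℝ)/2 ≤ |t a - t b| := by
    have : (1:ℝ)/2 ≤ t a - t b := by linarith
    calc (1:ℝ)/2 ≤ t a - t b := this
      _ ≤ |t a - t b| := le_abs_self _
  have habs : (0:ℝ) < |a - b| := abs_pos.2 (sub_ne_zero.2 hab)
  have hfin : (1:ℝ)/2 ≤ (d:ℝ) * |a - b| := by
    have := hlip
    rw [Real.norm_eq_abs, Real.norm_eq_abs] at this
    have hd0 : (0:ℝ) ≤ d := Nat.cast_nonneg d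
    nlinarith
  calc (1/2 : ℝ) * |a - b|⁻¹ ≤ ((d:ℝ) * |a - b|) * |a - b|⁻¹ := by
        apply mul_le_mul_of_nonneg_right hfin (by positivity)
    _ = (d:ℝ) := by field_simp
end
end

section
/- For all x, y ∈ [0,1], the operator norm of R(arcsin √x) − R(arcsin √y), as a linear map on the Euclidean space ℝ², is at most √(2 |x − y|). -/
/-- The 2×2 rotation matrix by angle `θ`. -/
noncomputable def RotM (θ : ℝ) : Matrix (Fin 2) (Fin 2) ℝ :=
  !![Real.cos θ, -Real.sin θ; Real.sin θ, Real.cos θ]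

theorem opNorm_phase_query_diff_le (x y : ℝ) (hx : x ∈ Set.Icc (0:ℝ) 1)
    (hy : y ∈ Set.Icc (0:ℝ) 1) :
    ‖Matrix.toEuclideanCLM (𝕜 := ℝ)
        (RotM (Real.arcsin (Real.sqrt x)) - RotM (Real.arcsin (Real.sqrt y)))‖
      ≤ Real.sqrt (2 * |x - y|) := by
  obtain ⟨hx0, hx1⟩ := hx
  obtain ⟨hy0, hy1⟩ := hy
  set a := Real.arcsin (Real.sqrt x) with ha
  set b := Real.arcsin (Real.sqrt y) with hb
  have hsa : Real.sin a = Real.sqrt x :=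
    Real.sin_arcsin (by linarith [Real.sqrt_nonneg x]) (Real.sqrt_le_one.mpr hx1)
  have hsb : Real.sin b = Real.sqrt y :=
    Real.sin_arcsin (by linarith [Real.sqrt_nonneg y]) (Real.sqrt_le_one.mpr hy1)
  have hca : Real.cos a = Real.sqrt (1 - x) := by
    rw [ha, Real.cos_arcsin, Real.sq_sqrt hx0]
  have hcb : Real.cos b = Real.sqrt (1 - y) := by
    rw [hb, Real.cos_arcsin, Real.sq_sqrt hy0]
  set c : ℝ := Real.cos a - Real.cos b with hc
  set s : ℝ := Real.sin a - Real.sin b with hs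
  have hM : RotM a - RotM b = !![c, -s; s, c] := by
    ext i j
    fin_cases i <;> fin_cases j <;>
      simp [RotM, hc, hs] <;> ring
  have hkey : c ^ 2 + s ^ 2 ≤ 2 * |x - y| := by
    rw [hc, hs, hsa, hsb, hca, hcb]
    have h1 : Real.sqrt x * Real.sqrt x = x := Real.mul_self_sqrt hx0
    have h2 : Real.sqrt y * Real.sqrt y = y := Real.mul_self_sqrt hy0
    have h3 : Real.sqrt (1 - x) * Real.sqrt (1 - x) = 1 - x :=
      Real.mul_self_sqrt (by linarith)
    have h4 : Real.sqrt (1 - y) * Real.sqrt (1 - y) = 1 - y :=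
      Real.mul_self_sqrt (by linarith)
    rcases le_total x y with h | h
    · rw [abs_of_nonpos (by linarith)]
      have h5 : Real.sqrt x ≤ Real.sqrt y := Real.sqrt_le_sqrt h
      have h6 : Real.sqrt (1 - y) ≤ Real.sqrt (1 - x) := Real.sqrt_le_sqrt (by linarith)
      nlinarith [mul_nonneg (Real.sqrt_nonneg x) (sub_nonneg.2 h5),
        mul_nonneg (Real.sqrt_nonneg (1 - y)) (sub_nonneg.2 h6)]
    · rw [abs_of_nonneg (by linarith)]
      have h5 : Real.sqrt y ≤ Real.sqrt x := Real.sqrt_le_sqrt h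
      have h6 : Real.sqrt (1 - x) ≤ Real.sqrt (1 - y) := Real.sqrt_le_sqrt (by linarith)
      nlinarith [mul_nonneg (Real.sqrt_nonneg y) (sub_nonneg.2 h5),
        mul_nonneg (Real.sqrt_nonneg (1 - x)) (sub_nonneg.2 h6)]
  rw [hM]
  apply ContinuousLinearMap.opNorm_le_bound _ (Real.sqrt_nonneg _)
  intro v
  have hnorm : ‖Matrix.toEuclideanCLM (𝕜 := ℝ) (!![c, -s; s, c]) v‖ ^ 2
      = (c ^ 2 + s ^ 2) * ‖v‖ ^ 2 := by
    rw [EuclideanSpace.norm_eq, EuclideanSpace.norm_eq,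
      Real.sq_sqrt (by positivity), Real.sq_sqrt (by positivity)]
    have : ∀ i, (Matrix.toEuclideanCLM (𝕜 := ℝ) (!![c, -s; s, c]) v) i
        = (Matrix.toLin' (!![c, -s; s, c]) fun j => v j) i := fun i => rfl
    simp only [this, Matrix.toLin'_apply, Matrix.mulVec, dotProduct,
      Fin.sum_univ_two, Real.norm_eq_abs, sq_abs]
    simp [Matrix.cons_val_zero, Matrix.cons_val_one]
    ring
  have h2 : ‖Matrix.toEuclideanCLM (𝕜 := ℝ) (!![c, -s; s, c]) v‖
      = Real.sqrt ((c ^ 2 + s ^ 2)) * ‖v‖ := by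
    rw [← Real.sqrt_sq (norm_nonneg _), hnorm, Real.sqrt_mul (by positivity),
      Real.sqrt_sq (norm_nonneg v)]
  rw [h2]
  gcongr
end

section
/- For every real ε with 0 ≤ ε ≤ 1/4, the Euclidean norm of the vector (R(arcsin √(1/2)) − R(arcsin √(1/2 − 2ε))) e₀, where e₀ = (1,0) is the first standard basis vector of ℝ², equals √(2 − √(1 + 4ε) − √(1 − 4ε)). -/
theorem norm_phase_query_half_diff_apply (ε : ℝ) (hε0 : 0 ≤ ε) (hε : ε ≤ 1/4) :
    ‖Matrix.toEuclideanCLM (𝕜 := ℝ)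
        (RotM (Real.arcsin (Real.sqrt (1/2)))
          - RotM (Real.arcsin (Real.sqrt (1/2 - 2 * ε))))
        (EuclideanSpace.single (0 : Fin 2) (1 : ℝ))‖
      = Real.sqrt (2 - Real.sqrt (1 + 4 * ε) - Real.sqrt (1 - 4 * ε)) := by
  set θ₁ := Real.arcsin (Real.sqrt (1/2)) with hθ₁
  set θ₂ := Real.arcsin (Real.sqrt (1/2 - 2 * ε)) with hθ₂
  rw [EuclideanSpace.norm_eq]
  have h : ∀ i, (Matrix.toEuclideanCLM (𝕜 := ℝ) (RotM θ₁ - RotM θ₂)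
      (EuclideanSpace.single (0 : Fin 2) (1 : ℝ))) i =
      Matrix.mulVec (RotM θ₁ - RotM θ₂) (fun j => if j = 0 then 1 else 0) i := by
    intro i
    rw [show (EuclideanSpace.single (0 : Fin 2) (1 : ℝ)) =
      (WithLp.equiv _ _).symm (fun j => if j = 0 then (1:ℝ) else 0) from ?_,
      WithLp.equiv_symm_apply, Matrix.toEuclideanCLM_toLp]
    · ext j; simp [EuclideanSpace.single_apply]
  simp only [h]
  have h0 : Matrix.mulVec (RotM θ₁ - RotM θ₂) (fun j => if j = 0 then 1 else 0) 0
      = Real.cos θ₁ - Real.cos θ₂ := by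
    simp [RotM, Matrix.mulVec, dotProduct, Fin.sum_univ_two]
  have h1 : Matrix.mulVec (RotM θ₁ - RotM θ₂) (fun j => if j = 0 then 1 else 0) 1
      = Real.sin θ₁ - Real.sin θ₂ := by
    simp [RotM, Matrix.mulVec, dotProduct, Fin.sum_univ_two]
  -- values of sin/cos
  have h2e : (0:ℝ) ≤ 1/2 - 2*ε := by linarith
  have hs1 : Real.sin θ₁ = Real.sqrt (1/2) := by
    rw [hθ₁, Real.sin_arcsin (le_trans (by norm_num) (Real.sqrt_nonneg _))
      (Real.sqrt_le_one.mpr (by norm_num))]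
  have hc1 : Real.cos θ₁ = Real.sqrt (1/2) := by
    rw [hθ₁, Real.cos_arcsin, Real.sq_sqrt (by norm_num)]
    norm_num
  have hs2 : Real.sin θ₂ = Real.sqrt (1/2 - 2*ε) := by
    rw [hθ₂, Real.sin_arcsin (le_trans (by norm_num) (Real.sqrt_nonneg _))
      (Real.sqrt_le_one.mpr (by linarith))]
  have hc2 : Real.cos θ₂ = Real.sqrt (1/2 + 2*ε) := by
    rw [hθ₂, Real.cos_arcsin, Real.sq_sqrt h2e]
    ring_nf
  rw [Fin.sum_univ_two, h0, h1, hs1, hc1, hs2, hc2]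
  -- products
  have h4 : Real.sqrt 4 = 2 := by
    rw [show (4:ℝ) = 2^2 by norm_num]; exact Real.sqrt_sq (by norm_num)
  have hp1 : Real.sqrt (1/2) * Real.sqrt (1/2 + 2*ε) = Real.sqrt (1 + 4*ε) / 2 := by
    rw [← Real.sqrt_mul (by norm_num),
      show (1:ℝ)/2 * (1/2 + 2*ε) = (1 + 4*ε)/4 by ring,
      Real.sqrt_div (by linarith), h4]
  have hp2 : Real.sqrt (1/2) * Real.sqrt (1/2 - 2*ε) = Real.sqrt (1 - 4*ε) / 2 := by
    rw [← Real.sqrt_mul (by norm_num),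
      show (1:ℝ)/2 * (1/2 - 2*ε) = (1 - 4*ε)/4 by ring,
      Real.sqrt_div (by linarith), h4]
  simp only [Real.norm_eq_abs, sq_abs]
  have key : (Real.sqrt (1/2) - Real.sqrt (1/2 + 2*ε))^2
      + (Real.sqrt (1/2) - Real.sqrt (1/2 - 2*ε))^2
      = 2 - Real.sqrt (1 + 4*ε) - Real.sqrt (1 - 4*ε) := by
    have e1 : Real.sqrt (1/2) ^ 2 = 1/2 := Real.sq_sqrt (by norm_num)
    have e2 : Real.sqrt (1/2 + 2*ε) ^ 2 = 1/2 + 2*ε := Real.sq_sqrt (by linarith)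
    have e3 : Real.sqrt (1/2 - 2*ε) ^ 2 = 1/2 - 2*ε := Real.sq_sqrt h2e
    nlinarith [hp1, hp2]
  rw [key]
end

section
/- For every real ε with 0 ≤ ε ≤ 1/4, the operator norm of R(arcsin √(1/2)) − R(arcsin √(1/2 − 2ε)), as a linear map on the Euclidean space ℝ², is at most 4 ε. -/
open Real

lemma norm_rotlike_le (c s : ℝ) :
    ‖Matrix.toEuclideanCLM (𝕜 := ℝ) (!![c, -s; s, c])‖ ≤ Real.sqrt (c^2 + s^2) := by
  apply ContinuousLinearMap.opNorm_le_bound _ (Real.sqrt_nonneg _)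
  intro x
  set y := (Matrix.toEuclideanCLM (𝕜 := ℝ) (!![c, -s; s, c])) x with hy
  have h0 : y 0 = c * x 0 - s * x 1 := by
    have h := congrFun (Matrix.ofLp_toEuclideanCLM (𝕜 := ℝ) (!![c, -s; s, c]) x) 0
    rw [hy, h]; simp [Matrix.mulVec, dotProduct, Fin.sum_univ_two, sub_eq_add_neg]
  have h1 : y 1 = s * x 0 + c * x 1 := by
    have h := congrFun (Matrix.ofLp_toEuclideanCLM (𝕜 := ℝ) (!![c, -s; s, c]) x) 1
    rw [hy, h]; simp [Matrix.mulVec, dotProduct, Fin.sum_univ_two]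
  have hny : ‖y‖ = Real.sqrt ((y 0)^2 + (y 1)^2) := by
    rw [EuclideanSpace.norm_eq]; simp [Fin.sum_univ_two, sq_abs]
  have hnx : ‖x‖ = Real.sqrt ((x 0)^2 + (x 1)^2) := by
    rw [EuclideanSpace.norm_eq]; simp [Fin.sum_univ_two, sq_abs]
  rw [hny, hnx, ← Real.sqrt_mul (by positivity)]
  apply Real.sqrt_le_sqrt
  rw [h0, h1]
  nlinarith [sq_nonneg (c * x 1 + s * x 0), sq_nonneg (c * x 0 - s * x 1)]

lemma RotM_sub (θ₁ θ₂ : ℝ) : RotM θ₁ - RotM θ₂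
    = !![Real.cos θ₁ - Real.cos θ₂, -(Real.sin θ₁ - Real.sin θ₂);
         Real.sin θ₁ - Real.sin θ₂, Real.cos θ₁ - Real.cos θ₂] := by
  ext i j
  fin_cases i <;> fin_cases j <;> simp [RotM, Matrix.sub_apply] <;> ring

theorem opNorm_phase_query_half_diff_le (ε : ℝ) (hε0 : 0 ≤ ε) (hε : ε ≤ 1/4) :
    ‖Matrix.toEuclideanCLM (𝕜 := ℝ)
        (RotM (Real.arcsin (Real.sqrt (1/2)))
          - RotM (Real.arcsin (Real.sqrt (1/2 - 2 * ε))))‖ ≤ 4 * ε := by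
  set a := Real.arcsin (Real.sqrt (1/2)) with ha
  set b := Real.arcsin (Real.sqrt (1/2 - 2 * ε)) with hb
  set u := Real.sqrt (1/2 + 2 * ε) with hu
  set v := Real.sqrt (1/2 - 2 * ε) with hv
  have hv0 : 0 ≤ v := Real.sqrt_nonneg _
  have hu0 : (0:ℝ) < u := Real.sqrt_pos.mpr (by linarith)
  have hu2 : u ^ 2 = 1/2 + 2 * ε := Real.sq_sqrt (by linarith)
  have hv2 : v ^ 2 = 1/2 - 2 * ε := Real.sq_sqrt (by linarith)
  have hv1 : v ≤ 1 := by nlinarith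
  have hsqrt_half : Real.sqrt (1/2) = Real.sqrt 2 / 2 := by
    have h2 : Real.sqrt 2 ^ 2 = 2 := Real.sq_sqrt (by norm_num)
    rw [show (1/2:ℝ) = (Real.sqrt 2 / 2)^2 by rw [div_pow, h2]; norm_num]
    exact Real.sqrt_sq (by positivity)
  have ha4 : a = π/4 := by
    rw [ha, hsqrt_half, ← Real.sin_pi_div_four]
    exact Real.arcsin_sin (by linarith [pi_pos]) (by linarith [pi_pos])
  have hsin_a : Real.sin a = Real.sqrt 2 / 2 := by rw [ha4, Real.sin_pi_div_four]
  have hcos_a : Real.cos a = Real.sqrt 2 / 2 := by rw [ha4, Real.cos_pi_div_four]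
  have hsin_b : Real.sin b = v := Real.sin_arcsin (by linarith) hv1
  have hcos_b : Real.cos b = u := by
    rw [hb, Real.cos_arcsin, hu]
    congr 1
    linarith
  have hb0 : 0 ≤ b := Real.arcsin_nonneg.mpr hv0
  have hba : b ≤ a := by
    rw [ha, hb]
    exact Real.monotone_arcsin (by apply Real.sqrt_le_sqrt; linarith)
  have hs2 : (0:ℝ) < Real.sqrt 2 := Real.sqrt_pos.mpr (by norm_num)
  -- the key angle bound
  have hΔ : a - b ≤ 4 * ε := by
    have hlt : a - b < π/2 := by rw [ha4]; linarith [pi_pos]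
    have htan := Real.le_tan (sub_nonneg.mpr hba) hlt
    rw [Real.tan_eq_sin_div_cos, Real.sin_sub, Real.cos_sub, hsin_a, hcos_a, hsin_b, hcos_b]
      at htan
    have hcpos : (0:ℝ) < Real.sqrt 2 / 2 * u + Real.sqrt 2 / 2 * v := by positivity
    have heq : (Real.sqrt 2 / 2 * u - Real.sqrt 2 / 2 * v) /
        (Real.sqrt 2 / 2 * u + Real.sqrt 2 / 2 * v) = (u - v) / (u + v) := by
      rw [div_eq_div_iff hcpos.ne' (by positivity)]; ring
    rw [heq] at htan
    have hfrac : (u - v) / (u + v) ≤ 4 * ε := by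
      rw [div_le_iff₀ (by positivity)]
      nlinarith [mul_nonneg hu0.le hv0, sq_nonneg (u + v), mul_nonneg hε0 (mul_nonneg hu0.le hv0)]
    linarith
  -- rewrite the matrix difference
  rw [RotM_sub]
  refine le_trans (norm_rotlike_le _ _) ?_
  have hsum : (Real.cos a - Real.cos b)^2 + (Real.sin a - Real.sin b)^2
      = 2 - 2 * Real.cos (a - b) := by
    rw [Real.cos_sub]
    linear_combination Real.sin_sq_add_cos_sq a + Real.sin_sq_add_cos_sq b
  have hcosle := Real.one_sub_sq_div_two_le_cos (x := a - b)
  have hle : (Real.cos a - Real.cos b)^2 + (Real.sin a - Real.sin b)^2 ≤ (4*ε)^2 := by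
    rw [hsum]
    have h2 : (a - b)^2 ≤ (4*ε)^2 := pow_le_pow_left₀ (sub_nonneg.mpr hba) hΔ 2
    linarith
  calc Real.sqrt ((Real.cos a - Real.cos b)^2 + (Real.sin a - Real.sin b)^2)
      ≤ Real.sqrt ((4*ε)^2) := Real.sqrt_le_sqrt hle
    _ = 4 * ε := Real.sqrt_sq (by positivity)
end
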